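/- arXiv:2209.11911 — 11 statements merged into one kernel-verified Lean document; each statement's English description precedes it below -/
import Mathlib

section
/- Let C be the Cantor-integer sequence for a strictly increasing f : {0,...,m} → ℕ with f(0)=0 and f(m) > m. Then for every n whose base-(m+1) expansion has at least two digits and leading digit nonzero, C(n)/n ≥ (f(m)+m+1)/(2m+1). -/
def cantorC (m : ℕ) (f : ℕ → ℕ) (n : ℕ) : ℕ :=
  Nat.ofDigits (f m + 1) ((Nat.digits (m + 1) n).map f)

theorem cantor_integers_ratio_lower_bound (m : ℕ) (hm : 1 ≤ m) (f : ℕ → ℕ)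
    (hf : ∀ i j, i < j → j ≤ m → f i < f j) (hf0 : f 0 = 0) (hfm : m < f m) :
    ∀ n : ℕ, m + 1 ≤ n →
      ((f m : ℝ) + m + 1) / (2 * m + 1) ≤ (cantorC m f n : ℝ) / n := by
  have hfd : ∀ d, d ≤ m → d ≤ f d := by
    intro d hd
    induction d with
    | zero => simp [hf0]
    | succ k ih =>
      have h1 := hf k (k + 1) (by omega) hd
      have h2 := ih (by omega)
      omega
  have hdecomp : ∀ n, 0 < n →
      cantorC m f n = f (n % (m + 1)) + (f m + 1) * cantorC m f (n / (m + 1)) := by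
    intro n h0
    have hdig : Nat.digits (m + 1) n = n % (m + 1) :: Nat.digits (m + 1) (n / (m + 1)) :=
      Nat.digits_def' (by omega) h0
    simp [cantorC, hdig, Nat.ofDigits_cons]
  have haux : ∀ n, n ≤ cantorC m f n := by
    intro n
    induction n using Nat.strong_induction_on with
    | _ n ih =>
      rcases Nat.eq_zero_or_pos n with h0 | h0
      · subst h0; simp [cantorC]
      · have h1 := ih (n / (m + 1)) (Nat.div_lt_self h0 (by omega))
        have h2 := hfd (n % (m + 1)) (by
          have := Nat.mod_lt n (show 0 < m + 1 by omega); omega)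
        have h3 : (m + 1) * (n / (m + 1)) ≤ (f m + 1) * cantorC m f (n / (m + 1)) :=
          Nat.mul_le_mul (by omega) h1
        calc n = n % (m + 1) + (m + 1) * (n / (m + 1)) := (Nat.mod_add_div n (m + 1)).symm
          _ ≤ f (n % (m + 1)) + (f m + 1) * cantorC m f (n / (m + 1)) := Nat.add_le_add h2 h3
          _ = cantorC m f n := (hdecomp n h0).symm
  intro n hn
  have hn0 : 0 < n := by omega
  have key : (f m + 1 + m) * n ≤ (2 * m + 1) * cantorC m f n := by
    have hdec := hdecomp n hn0
    set t := n / (m + 1) with htdef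
    set d := n % (m + 1) with hddef
    have ht : 1 ≤ t := Nat.one_le_div_iff (by omega) |>.mpr hn
    have hd : d ≤ m := by
      have := Nat.mod_lt n (show 0 < m + 1 by omega); omega
    have hCt : t ≤ cantorC m f t := haux t
    have hfdd : d ≤ f d := hfd d hd
    have hB : m + 2 ≤ f m + 1 := by omega
    have hnd : d + (m + 1) * t = n := Nat.mod_add_div n (m + 1)
    rw [hdec]
    nlinarith [hnd, Nat.mul_le_mul (le_refl (f m + 1)) hCt,
      Nat.mul_le_mul hd ht, Nat.mul_le_mul (Nat.mul_le_mul hd ht) hB]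
  rw [div_le_div_iff₀ (by positivity) (by exact_mod_cast hn0)]
  have hcast : ((f m + 1 + m) * n : ℝ) ≤ ((2 * m + 1) * cantorC m f n : ℝ) := by
    exact_mod_cast key
  push_cast at hcast ⊢
  linarith
end

section
/- Let C be the Cantor-integer sequence for strictly increasing f : {0,...,m} → ℕ with f(0)=0, f(m) > m, and set α = log(f(m)+1)/log(m+1). Then for every n ≥ m+1, C((m+1)n+m)/((m+1)n+m)^α ≤ C(n)/n^α. -/
lemma cantorC_zero (m : ℕ) (f : ℕ → ℕ) : cantorC m f 0 = 0 := by
  simp [cantorC]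

lemma cantorC_rec (m : ℕ) (hm : 1 ≤ m) (f : ℕ → ℕ) (n : ℕ) (hn : 0 < n) :
    cantorC m f n = f (n % (m + 1)) + (f m + 1) * cantorC m f (n / (m + 1)) := by
  unfold cantorC
  rw [Nat.digits_def' (by omega : 1 < m + 1) hn]
  simp [Nat.ofDigits_cons]

lemma f_ge (m : ℕ) (f : ℕ → ℕ)
    (hf : ∀ i j, i < j → j ≤ m → f i < f j) (hf0 : f 0 = 0) :
    ∀ d, d ≤ m → d ≤ f d := by
  intro d
  induction d with
  | zero => intro _; omega
  | succ k ih =>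
    intro hk
    have h1 : f k < f (k + 1) := hf k (k + 1) (by omega) hk
    have h2 : k ≤ f k := ih (by omega)
    omega

lemma cantorC_append (m : ℕ) (hm : 1 ≤ m) (f : ℕ → ℕ) (n : ℕ) (hn : 0 < n) :
    cantorC m f ((m + 1) * n + m) = f m + (f m + 1) * cantorC m f n := by
  rw [cantorC_rec m hm f _ (by omega)]
  have h1 : ((m + 1) * n + m) % (m + 1) = m := by
    rw [add_comm, Nat.add_mul_mod_self_left, Nat.mod_eq_of_lt (by omega)]
  have h2 : ((m + 1) * n + m) / (m + 1) = n := by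
    rw [add_comm, Nat.add_mul_div_left _ _ (by omega : 0 < m + 1),
      Nat.div_eq_of_lt (by omega), zero_add]
  rw [h1, h2]

lemma cantorC_single (m : ℕ) (hm : 1 ≤ m) (f : ℕ → ℕ) (q : ℕ) (hq0 : 0 < q) (hq : q ≤ m) :
    cantorC m f q = f q := by
  rw [cantorC_rec m hm f q hq0, Nat.mod_eq_of_lt (by omega), Nat.div_eq_of_lt (by omega),
    cantorC_zero]
  ring


lemma keyInt (b F q r fq fr C : ℤ) (hb : 2 ≤ b) (hF : b + 1 ≤ F) (hq : 1 ≤ q)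
    (hqb : q ≤ b - 1) (hr0 : 0 ≤ r) (hrb : r ≤ b - 1) (hfq : q ≤ fq) (hfr : r ≤ fr)
    (hC : C = fr + F * fq) :
    (F - 1) * b * (b * q + r) ≤ F * (b - 1) * C := by
  subst hC
  have hFb : (0:ℤ) ≤ F - b := by linarith
  have hD : (0:ℤ) ≤ (F - b - 1) * ((b - 1) * F - b) + b * (b - 2) := by
    have h1 : (0:ℤ) ≤ F - b - 1 := by linarith
    have h2 : (0:ℤ) ≤ (b - 1) * F - b := by nlinarith
    have h3 : (0:ℤ) ≤ b * (b - 2) := by nlinarith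
    nlinarith
  have P1 : (0:ℤ) ≤ (fq - q) * (F * F * (b - 1)) := by
    apply mul_nonneg (by linarith)
    nlinarith
  have P2 : (0:ℤ) ≤ (fr - r) * (F * (b - 1)) := by
    apply mul_nonneg (by linarith)
    nlinarith
  have P4 : (0:ℤ) ≤ (q - 1) * ((b - 1) * (F - b) + ((F - b - 1) * ((b - 1) * F - b) + b * (b - 2))) := by
    apply mul_nonneg (by linarith)
    have : (0:ℤ) ≤ (b - 1) * (F - b) := by nlinarith
    linarith
  have P5 : (0:ℤ) ≤ (b - 1 - r) * (F - b) := mul_nonneg (by linarith) hFb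
  nlinarith [P1, P2, P4, P5]

lemma lemA (m : ℕ) (hm : 1 ≤ m) (f : ℕ → ℕ)
    (hf : ∀ i j, i < j → j ≤ m → f i < f j) (hf0 : f 0 = 0) (hfm : m < f m) :
    ∀ n, m + 1 ≤ n → f m * (m + 1) * n ≤ (f m + 1) * m * cantorC m f n := by
  intro n
  induction n using Nat.strong_induction_on with
  | _ n ih =>
    intro hn
    have hrec := cantorC_rec m hm f n (by omega)
    set q := n / (m + 1) with hq_def
    set r := n % (m + 1) with hr_def
    have hr : r ≤ m := by
      have := Nat.mod_lt n (show 0 < m + 1 by omega)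
      omega
    have hn_eq : (m + 1) * q + r = n := Nat.div_add_mod n (m + 1)
    have hq1 : 1 ≤ q := by
      rw [hq_def]
      exact Nat.one_le_div_iff (by omega) |>.2 hn
    rw [hrec]
    have hqn : q < n := by
      have h2 : 2 * q ≤ (m + 1) * q := Nat.mul_le_mul_right q (by omega)
      omega
    by_cases hq : m + 1 ≤ q
    · have hIH := ih q hqn hq
      have e2 : n ≤ (m + 2) * q := by
        have : (m + 2) * q = (m + 1) * q + q := by ring
        omega
      have h1 : n ≤ (f m + 1) * q := e2.trans (Nat.mul_le_mul_right q (by omega))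
      calc f m * (m + 1) * n ≤ f m * (m + 1) * ((f m + 1) * q) :=
            Nat.mul_le_mul_left _ h1
        _ = (f m + 1) * (f m * (m + 1) * q) := by ring
        _ ≤ (f m + 1) * ((f m + 1) * m * cantorC m f q) := Nat.mul_le_mul_left _ hIH
        _ ≤ (f m + 1) * m * f r + (f m + 1) * ((f m + 1) * m * cantorC m f q) :=
            Nat.le_add_left _ _
        _ = (f m + 1) * m * (f r + (f m + 1) * cantorC m f q) := by ring
    · have hCq : cantorC m f q = f q := cantorC_single m hm f q (by omega) (by omega)
      rw [hCq]
      have hfq : q ≤ f q := f_ge m f hf hf0 q (by omega)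
      have hfr2 : r ≤ f r := f_ge m f hf hf0 r hr
      have key := keyInt (m + 1) (f m + 1) q r (f q) (f r) (f r + (f m + 1) * f q)
        (by push_cast; omega) (by push_cast; omega) (by exact_mod_cast hq1)
        (by push_cast; omega) (by positivity) (by push_cast; omega)
        (by exact_mod_cast hfq) (by exact_mod_cast hfr2) (by push_cast; ring)
      have := hn_eq
      zify at this ⊢
      rw [← this]
      push_cast
      push_cast at key
      linarith [key]

theorem cantor_integers_append_m_decreases (m : ℕ) (hm : 1 ≤ m) (f : ℕ → ℕ)
    (hf : ∀ i j, i < j → j ≤ m → f i < f j) (hf0 : f 0 = 0) (hfm : m < f m)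
    (α : ℝ) (hα : α = Real.log (f m + 1) / Real.log (m + 1)) :
    ∀ n : ℕ, m + 1 ≤ n →
      (cantorC m f ((m + 1) * n + m) : ℝ) / (((m + 1) * n + m : ℕ) : ℝ) ^ α ≤
        (cantorC m f n : ℝ) / (n : ℝ) ^ α := by
  intro n hn
  have hn0 : 0 < n := by omega
  have hCapp := cantorC_append m hm f n hn0
  have hA := lemA m hm f hf hf0 hfm n hn
  -- real abbreviations
  have hmR : (1:ℝ) ≤ (m:ℝ) := by exact_mod_cast hm
  have hfmR : (m:ℝ) + 1 ≤ (f m : ℝ) := by exact_mod_cast hfm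
  have hB1 : (1:ℝ) < (m:ℝ) + 1 := by linarith
  have hxR : ((m:ℝ) + 1) ≤ (n:ℝ) := by exact_mod_cast hn
  have hxpos : (0:ℝ) < (n:ℝ) := by linarith
  have hBx : (0:ℝ) < ((m:ℝ) + 1) * (n:ℝ) := by positivity
  have hlogB : 0 < Real.log ((m:ℝ) + 1) := Real.log_pos hB1
  have hα1 : 1 ≤ α := by
    rw [hα, le_div_iff₀ hlogB, one_mul]
    exact Real.log_le_log (by linarith) (by linarith)
  have hBα : ((m:ℝ) + 1) ^ α = (f m : ℝ) + 1 := by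
    rw [hα, Real.rpow_def_of_pos (by linarith), mul_comm,
      div_mul_cancel₀ _ hlogB.ne', Real.exp_log (by linarith)]
  -- cast the append formula and lemma A to ℝ
  have hCappR : (cantorC m f ((m + 1) * n + m) : ℝ) =
      (f m : ℝ) + ((f m : ℝ) + 1) * (cantorC m f n : ℝ) := by
    rw [hCapp]; push_cast; ring
  have hAR : (f m : ℝ) * ((m:ℝ) + 1) * (n:ℝ) ≤
      ((f m : ℝ) + 1) * (m:ℝ) * (cantorC m f n : ℝ) := by exact_mod_cast hA
  have hNR : (((m + 1) * n + m : ℕ) : ℝ) = ((m:ℝ) + 1) * (n:ℝ) + (m:ℝ) := by push_cast; ring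
  set c : ℝ := (cantorC m f n : ℝ) with hc_def
  have hc0 : (0:ℝ) ≤ c := Nat.cast_nonneg _
  set x : ℝ := (n:ℝ) with hx_def
  set t : ℝ := (m:ℝ) / (((m:ℝ) + 1) * x) with ht_def
  have ht0 : 0 ≤ t := by positivity
  have hNpos : (0:ℝ) < ((m:ℝ) + 1) * x + (m:ℝ) := by positivity
  rw [hCappR, hNR, div_le_div_iff₀ (Real.rpow_pos_of_pos hNpos α) (Real.rpow_pos_of_pos hxpos α)]
  -- key facts
  have hfact1 : (f m : ℝ) ≤ ((f m : ℝ) + 1) * c * t := by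
    rw [show ((f m : ℝ) + 1) * c * t = (((f m : ℝ) + 1) * (m:ℝ) * c) / (((m:ℝ) + 1) * x) by
      rw [ht_def]; field_simp]
    rw [le_div_iff₀ hBx]
    nlinarith [hAR]
  have hy_eq : ((m:ℝ) + 1) * x + (m:ℝ) = (((m:ℝ) + 1) * x) * (1 + t) := by
    rw [ht_def]; field_simp
  have hfact2 : ((f m : ℝ) + 1) * x ^ α * (1 + t) ≤ (((m:ℝ) + 1) * x + (m:ℝ)) ^ α := by
    rw [hy_eq, Real.mul_rpow hBx.le (by linarith),
      Real.mul_rpow (by linarith : (0:ℝ) ≤ (m:ℝ) + 1) hxpos.le, hBα]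
    have h1t : (1:ℝ) ≤ 1 + t := by linarith
    have := Real.rpow_le_rpow_of_exponent_le h1t hα1
    rw [Real.rpow_one] at this
    exact mul_le_mul_of_nonneg_left this (by positivity)
  have hxα : (0:ℝ) < x ^ α := Real.rpow_pos_of_pos hxpos α
  have hfact3 : c * (((f m : ℝ) + 1) * x ^ α * (1 + t)) ≤ c * (((m:ℝ) + 1) * x + (m:ℝ)) ^ α :=
    mul_le_mul_of_nonneg_left hfact2 hc0
  have hfact4 : x ^ α * (f m : ℝ) ≤ x ^ α * (((f m : ℝ) + 1) * c * t) :=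
    mul_le_mul_of_nonneg_left hfact1 hxα.le
  linarith [hfact3, hfact4]
end

section
/- Let C be the Cantor-integer sequence for strictly increasing f : {0,...,m} → ℕ with f(0)=0, f(m)>m, and α = log(f(m)+1)/log(m+1). Then sup over n ≥ 1 of C(n)/n^α equals the maximum over ε ∈ {1,...,m} of f(ε)/ε^α. -/
private lemma rpow_superadd {x y p : ℝ} (hx : 0 ≤ x) (hy : 0 ≤ y) (hp : 1 ≤ p) :
    x ^ p + y ^ p ≤ (x + y) ^ p := by
  lift x to NNReal using hx
  lift y to NNReal using hy
  have := NNReal.add_rpow_le_rpow_add x y hp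
  exact_mod_cast this

theorem cantor_integers_sup (m : ℕ) (hm : 1 ≤ m) (f : ℕ → ℕ)
    (hf : ∀ i j, i < j → j ≤ m → f i < f j) (hf0 : f 0 = 0) (hfm : m < f m)
    (α : ℝ) (hα : α = Real.log (f m + 1) / Real.log (m + 1)) :
    sSup {x : ℝ | ∃ n : ℕ, 1 ≤ n ∧ x = (cantorC m f n : ℝ) / (n : ℝ) ^ α} =
      sSup {x : ℝ | ∃ ε : ℕ, 1 ≤ ε ∧ ε ≤ m ∧ x = (f ε : ℝ) / (ε : ℝ) ^ α} := by
  have hb : (1:ℕ) < m + 1 := by omega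
  have hmR : (1:ℝ) ≤ (m:ℝ) := by exact_mod_cast hm
  have hlogb : 0 < Real.log ((m:ℝ) + 1) := Real.log_pos (by linarith)
  have hfmR : (m:ℝ) < (f m : ℝ) := by exact_mod_cast hfm
  have hα1 : 1 ≤ α := by
    rw [hα, le_div_iff₀ hlogb, one_mul]
    exact Real.log_le_log (by linarith) (by linarith)
  have hα0 : α ≠ 0 := by positivity
  -- (m+1)^α = f m + 1
  have hpow : ((m:ℝ) + 1) ^ α = (f m : ℝ) + 1 := by
    have h1 : Real.log ((m:ℝ) + 1) * α = Real.log ((f m : ℝ) + 1) := by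
      rw [hα]; field_simp
    rw [Real.rpow_def_of_pos (by linarith), h1, Real.exp_log (by linarith)]
  set T : Set ℝ := {x : ℝ | ∃ ε : ℕ, 1 ≤ ε ∧ ε ≤ m ∧ x = (f ε : ℝ) / (ε : ℝ) ^ α} with hT
  set M : ℝ := sSup T with hMdef
  have hTne : T.Nonempty := ⟨(f m : ℝ) / (m : ℝ) ^ α, m, hm, le_refl m, rfl⟩
  have hTbdd : BddAbove T := by
    have hsub : T ⊆ (fun ε : ℕ => (f ε : ℝ) / (ε : ℝ) ^ α) '' (Set.Icc 1 m) := by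
      rintro x ⟨ε, h1, h2, rfl⟩
      exact ⟨ε, Set.mem_Icc.2 ⟨h1, h2⟩, rfl⟩
    exact (((Set.finite_Icc 1 m).image _).subset hsub).bddAbove
  have hM0 : 0 ≤ M := by
    refine le_trans ?_ (le_csSup hTbdd ⟨m, hm, le_refl m, rfl⟩)
    positivity
  -- pointwise bound f r ≤ M * r^α for all r ≤ m
  have hfr : ∀ r : ℕ, r ≤ m → (f r : ℝ) ≤ M * (r : ℝ) ^ α := by
    intro r hr
    rcases Nat.eq_zero_or_pos r with rfl | hr1
    · simp [hf0, Real.zero_rpow hα0]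
    · have hrp : (0:ℝ) < (r:ℝ) ^ α := by
        apply Real.rpow_pos_of_pos; exact_mod_cast hr1
      have := le_csSup hTbdd (⟨r, hr1, hr, rfl⟩ : ((f r : ℝ) / (r : ℝ) ^ α) ∈ T)
      rw [div_le_iff₀ hrp] at this
      linarith
  -- key: C(n) ≤ M * n^α for all n
  have hkey : ∀ n : ℕ, (cantorC m f n : ℝ) ≤ M * (n : ℝ) ^ α := by
    intro n
    induction n using Nat.strong_induction_on with
    | _ n ih =>
      rcases Nat.eq_zero_or_pos n with rfl | hn
      · simp [cantorC, Real.zero_rpow hα0]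
      rcases le_or_gt n m with hle | hgt
      · have hdig : Nat.digits (m + 1) n = [n] := by
          rw [Nat.digits_def' hb hn, Nat.mod_eq_of_lt (by omega),
            Nat.div_eq_of_lt (by omega)]
          simp
        rw [cantorC, hdig]
        simpa [Nat.ofDigits] using hfr n hle
      · -- n ≥ m+1
        set q := n / (m + 1) with hq
        set r := n % (m + 1) with hr
        have hq1 : 1 ≤ q := (Nat.one_le_div_iff (by omega)).2 (by omega)
        have hqn : q < n := Nat.div_lt_self hn (by omega)
        have hC : (cantorC m f n : ℝ) = (f r : ℝ) + ((f m : ℝ) + 1) * (cantorC m f q : ℝ) := by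
          have hnat : cantorC m f n = f r + (f m + 1) * cantorC m f q := by
            rw [cantorC, Nat.digits_def' hb hn, List.map_cons, Nat.ofDigits_cons]
            rfl
          rw [hnat]; push_cast; ring
        have hih := ih q hqn
        have hrm : r ≤ m := by
          have := Nat.mod_lt n (show 0 < m + 1 by omega); omega
        have hqR : (0:ℝ) ≤ (q:ℝ) := by positivity
        have hBq : ((f m : ℝ) + 1) * (q:ℝ) ^ α = (((m:ℝ) + 1) * (q:ℝ)) ^ α := by
          rw [Real.mul_rpow (by linarith) hqR, hpow]
        have hsup : (r:ℝ) ^ α + (((m:ℝ) + 1) * (q:ℝ)) ^ α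
            ≤ (((m:ℝ) + 1) * (q:ℝ) + (r:ℝ)) ^ α := by
          have := rpow_superadd (x := ((m:ℝ) + 1) * (q:ℝ)) (y := (r:ℝ))
            (by positivity) (by positivity) hα1
          linarith
        have hn_eq : ((m:ℝ) + 1) * (q:ℝ) + (r:ℝ) = (n:ℝ) := by
          have : (m + 1) * q + r = n := Nat.div_add_mod n (m + 1)
          exact_mod_cast this
        calc (cantorC m f n : ℝ) = (f r : ℝ) + ((f m : ℝ) + 1) * (cantorC m f q : ℝ) := hC
          _ ≤ M * (r:ℝ) ^ α + ((f m : ℝ) + 1) * (M * (q:ℝ) ^ α) := by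
              have hB0 : (0:ℝ) ≤ (f m : ℝ) + 1 := by linarith
              have := mul_le_mul_of_nonneg_left hih hB0
              have := hfr r hrm
              linarith
          _ = M * ((r:ℝ) ^ α + (((m:ℝ) + 1) * (q:ℝ)) ^ α) := by
              rw [← hBq]; ring
          _ ≤ M * ((((m:ℝ) + 1) * (q:ℝ) + (r:ℝ)) ^ α) := by
              exact mul_le_mul_of_nonneg_left hsup hM0
          _ = M * (n:ℝ) ^ α := by rw [hn_eq]
  set S : Set ℝ := {x : ℝ | ∃ n : ℕ, 1 ≤ n ∧ x = (cantorC m f n : ℝ) / (n : ℝ) ^ α} with hS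
  have hSle : ∀ x ∈ S, x ≤ M := by
    rintro x ⟨n, hn1, rfl⟩
    have hnp : (0:ℝ) < (n:ℝ) ^ α := by
      apply Real.rpow_pos_of_pos; exact_mod_cast hn1
    rw [div_le_iff₀ hnp]
    exact hkey n
  have hTS : T ⊆ S := by
    rintro x ⟨ε, h1, h2, rfl⟩
    refine ⟨ε, h1, ?_⟩
    have hdig : Nat.digits (m + 1) ε = [ε] := by
      rw [Nat.digits_def' hb h1, Nat.mod_eq_of_lt (by omega),
        Nat.div_eq_of_lt (by omega)]
      simp
    rw [cantorC, hdig]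
    simp [Nat.ofDigits]
  apply le_antisymm
  · exact Real.sSup_le hSle hM0
  · exact csSup_le_csSup ⟨M, hSle⟩ hTne hTS
end

section
/- Let C be the Cantor-integer sequence for strictly increasing f with f(0)=0, f(m)>m, and α = log(f(m)+1)/log(m+1). For every n ≥ 1, the sequence k ↦ C(n·(m+1)^k + (m+1)^k − 1)/(n·(m+1)^k + (m+1)^k − 1)^α (appending k digits m to n in base m+1) is nonincreasing in k and converges to (C(n)+1)/(n+1)^α as k → ∞. -/
open Real Filter

theorem digits_mul_pow_sub_one' (B : ℕ) (hB : 2 ≤ B) (n k : ℕ) :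
    Nat.digits B ((n+1)*B^k - 1) = List.replicate k (B-1) ++ Nat.digits B n := by
  induction k with
  | zero => simp
  | succ k ih =>
    have hB0 : 0 < B := by omega
    have hx : 1 ≤ (n+1)*B^k := Nat.one_le_iff_ne_zero.mpr (by positivity)
    have hms : (n+1)*B^(k+1) = B * ((n+1)*B^k) := by ring
    have key : (n+1)*B^(k+1) - 1 = B * ((n+1)*B^k - 1) + (B-1) := by
      have h4 : B * ((n+1)*B^k - 1) = B * ((n+1)*B^k) - B := by
        rw [Nat.mul_sub, Nat.mul_one]
      have h5 : B ≤ B * ((n+1)*B^k) := Nat.le_mul_of_pos_right B (by omega)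
      omega
    rw [key, Nat.digits_def' (by omega : 1 < B) (by omega)]
    have h1 : (B * ((n+1)*B^k - 1) + (B-1)) % B = B - 1 := by
      rw [Nat.mul_add_mod]; exact Nat.mod_eq_of_lt (by omega)
    have h2 : (B * ((n+1)*B^k - 1) + (B-1)) / B = (n+1)*B^k - 1 := by
      rw [Nat.mul_add_div hB0, Nat.div_eq_of_lt (by omega)]; omega
    rw [h1, h2, ih]
    simp [List.replicate_succ]

theorem ofDigits_replicate' (b k : ℕ) (hb : 1 ≤ b) :
    Nat.ofDigits b (List.replicate k (b-1)) + 1 = b^k := by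
  induction k with
  | zero => simp
  | succ k ih =>
    rw [List.replicate_succ, Nat.ofDigits_cons]
    have hm : b * (Nat.ofDigits b (List.replicate k (b-1)) + 1) = b^(k+1) := by
      rw [ih]; ring
    have hm2 : b * Nat.ofDigits b (List.replicate k (b-1)) + b = b^(k+1) := by
      rw [← hm]; ring
    omega

theorem ofDigits_le_map' (b₁ b₂ : ℕ) (f : ℕ → ℕ) (h : b₂ ≤ b₁) (L : List ℕ)
    (hd : ∀ d ∈ L, d ≤ f d) :
    Nat.ofDigits b₂ L ≤ Nat.ofDigits b₁ (L.map f) := by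
  induction L with
  | nil => simp
  | cons d L ih =>
    simp only [List.map_cons, Nat.ofDigits_cons]
    have h1 : d ≤ f d := hd d (by simp)
    have h2 : Nat.ofDigits b₂ L ≤ Nat.ofDigits b₁ (L.map f) := ih (fun x hx => hd x (by simp [hx]))
    have := Nat.mul_le_mul h h2
    omega

theorem rfun_hasDerivAt (c n α : ℝ) (hn : 1 ≤ n) (t : ℝ) (ht : 1 ≤ t) :
    HasDerivAt (fun t : ℝ => ((c+1) * t ^ α - 1) / ((n+1)*t - 1) ^ α)
      ((((c+1) * (α * t ^ (α-1))) * (((n+1)*t - 1) ^ α)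
        - ((c+1) * t ^ α - 1) * ((n+1) * α * ((n+1)*t - 1) ^ (α - 1)))
        / (((n+1)*t - 1) ^ α) ^ 2) t := by
  have ht0 : (0:ℝ) < t := by linarith
  have hu0 : (0:ℝ) < (n+1)*t - 1 := by nlinarith
  have hg : HasDerivAt (fun t : ℝ => (c+1) * t ^ α - 1) ((c+1) * (α * t ^ (α-1))) t :=
    ((Real.hasDerivAt_rpow_const (Or.inl ht0.ne')).const_mul (c+1)).sub_const 1
  have hu : HasDerivAt (fun t : ℝ => (n+1)*t - 1) (n+1) t := by
    simpa using ((hasDerivAt_id t).const_mul (n+1)).sub_const (1:ℝ)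
  have hh : HasDerivAt (fun t : ℝ => ((n+1)*t - 1) ^ α)
      ((n+1) * α * ((n+1)*t - 1) ^ (α - 1)) t :=
    hu.rpow_const (Or.inl hu0.ne')
  exact hg.div hh (by positivity)

theorem rfun_antitoneOn (c n α : ℝ) (hα1 : 1 ≤ α) (hn : 1 ≤ n) (hcn : n ≤ c) :
    AntitoneOn (fun t : ℝ => ((c+1) * t ^ α - 1) / ((n+1)*t - 1) ^ α) (Set.Ici 1) := by
  apply antitoneOn_of_deriv_nonpos (convex_Ici 1)
  · intro t ht
    exact (rfun_hasDerivAt c n α hn t ht).continuousAt.continuousWithinAt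
  · rw [interior_Ici]
    intro t ht
    exact (rfun_hasDerivAt c n α hn t (le_of_lt ht)).differentiableAt.differentiableWithinAt
  · rw [interior_Ici]
    intro t ht
    have ht' : (1:ℝ) ≤ t := le_of_lt ht
    rw [(rfun_hasDerivAt c n α hn t ht').deriv]
    have ht0 : (0:ℝ) < t := by linarith
    have hu0 : (0:ℝ) < (n+1)*t - 1 := by nlinarith
    apply div_nonpos_of_nonpos_of_nonneg _ (by positivity)
    have h1 : ((n+1)*t - 1) ^ α = ((n+1)*t - 1) ^ (α-1) * ((n+1)*t - 1) := by
      rw [← Real.rpow_add_one hu0.ne' (α-1)]; ring_nf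
    have h2 : t ^ α = t ^ (α-1) * t := by
      rw [← Real.rpow_add_one ht0.ne' (α-1)]; ring_nf
    have h3 : (1:ℝ) ≤ t ^ (α-1) := Real.one_le_rpow ht' (by linarith)
    have h4 : (0:ℝ) ≤ ((n+1)*t - 1) ^ (α-1) := Real.rpow_nonneg (le_of_lt hu0) _
    rw [h1, h2]
    have key : ((c+1) * (α * t ^ (α-1))) * (((n+1)*t - 1) ^ (α-1) * ((n+1)*t - 1))
        - ((c+1) * (t ^ (α-1) * t) - 1) * ((n+1) * α * ((n+1)*t - 1) ^ (α-1))
        = α * ((n+1)*t - 1) ^ (α-1) * ((n+1) - (c+1) * t ^ (α-1)) := by ring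
    rw [key]
    have h5 : (n+1) - (c+1) * t ^ (α-1) ≤ 0 := by nlinarith
    have h6 : 0 ≤ α * ((n+1)*t - 1) ^ (α-1) := by positivity
    exact mul_nonpos_of_nonneg_of_nonpos h6 h5

theorem rfun_tendsto (c n α : ℝ) (hα0 : 0 < α) (hn : 1 ≤ n) :
    Tendsto (fun t : ℝ => ((c+1) * t ^ α - 1) / ((n+1)*t - 1) ^ α) atTop
      (nhds ((c+1) / (n+1) ^ α)) := by
  have hne : ((n:ℝ)+1) ≠ 0 := by positivity
  have hmain : Tendsto (fun t : ℝ => ((c+1) - t ^ (-α)) / ((n+1) - t⁻¹) ^ α) atTop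
      (nhds ((c+1) / (n+1) ^ α)) := by
    have h1 : Tendsto (fun t : ℝ => (c+1) - t ^ (-α)) atTop (nhds (c+1)) := by
      simpa using (tendsto_rpow_neg_atTop hα0).const_sub (c+1)
    have h2 : Tendsto (fun t : ℝ => (n+1) - t⁻¹) atTop (nhds (n+1)) := by
      simpa using tendsto_inv_atTop_zero.const_sub (n+1)
    have h3 : Tendsto (fun t : ℝ => ((n+1) - t⁻¹) ^ α) atTop (nhds ((n+1) ^ α)) :=
      ((Real.continuousAt_rpow_const _ α (Or.inl hne)).tendsto).comp h2
    exact h1.div h3 (by positivity)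
  apply hmain.congr'
  filter_upwards [eventually_ge_atTop (1:ℝ)] with t ht
  have ht0 : (0:ℝ) < t := by linarith
  have hinner : (0:ℝ) ≤ (n+1) - t⁻¹ := by
    have : t⁻¹ ≤ 1 := by
      rw [inv_le_one_iff₀]; right; exact ht
    linarith
  have htα : (0:ℝ) < t ^ α := Real.rpow_pos_of_pos ht0 _
  have hnum : (c+1) * t ^ α - 1 = t ^ α * ((c+1) - t ^ (-α)) := by
    have : t ^ α * t ^ (-α) = 1 := by
      rw [← Real.rpow_add ht0]; simp
    nlinarith [this]
  have hden : ((n+1)*t - 1) ^ α = t ^ α * ((n+1) - t⁻¹) ^ α := by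
    have h5 : (n+1)*t - 1 = t * ((n+1) - t⁻¹) := by
      rw [mul_sub, mul_inv_cancel₀ ht0.ne']; ring
    rw [h5, Real.mul_rpow (le_of_lt ht0) hinner]
  rw [hnum, hden, mul_div_mul_left _ _ htα.ne']

theorem le_f' (m : ℕ) (f : ℕ → ℕ) (hf : ∀ i j, i < j → j ≤ m → f i < f j) (hf0 : f 0 = 0) :
    ∀ i, i ≤ m → i ≤ f i := by
  intro i
  induction i with
  | zero => omega
  | succ i ih =>
    intro h
    have h1 : f i < f (i+1) := hf i (i+1) (by omega) h
    have := ih (by omega)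
    omega

theorem cantorC_key (m : ℕ) (hm : 1 ≤ m) (f : ℕ → ℕ) (hfm : m < f m) (n k : ℕ) :
    cantorC m f ((n+1)*(m+1)^k - 1) + 1 = (f m + 1)^k * (cantorC m f n + 1) := by
  unfold cantorC
  rw [digits_mul_pow_sub_one' (m+1) (by omega) n k]
  simp only [Nat.add_sub_cancel, List.map_append, List.map_replicate]
  rw [Nat.ofDigits_append]
  have h1 : Nat.ofDigits (f m + 1) (List.replicate k ((f m + 1) - 1)) + 1 = (f m + 1)^k :=
    ofDigits_replicate' (f m + 1) k (by omega)
  simp only [Nat.add_sub_cancel] at h1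
  rw [List.length_replicate]
  have h2 : (f m + 1)^k ≥ 1 := Nat.one_le_pow _ _ (by omega)
  have h3 : (f m + 1)^k * (Nat.ofDigits (f m + 1) (List.map f (Nat.digits (m+1) n)) + 1)
      = (f m + 1)^k * Nat.ofDigits (f m + 1) (List.map f (Nat.digits (m+1) n)) + (f m + 1)^k := by
    ring
  omega

theorem n_le_cantorC (m : ℕ) (hm : 1 ≤ m) (f : ℕ → ℕ) (hf : ∀ i j, i < j → j ≤ m → f i < f j)
    (hf0 : f 0 = 0) (hfm : m < f m) (n : ℕ) : n ≤ cantorC m f n := by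
  unfold cantorC
  conv_lhs => rw [← Nat.ofDigits_digits (m+1) n]
  apply ofDigits_le_map' (f m + 1) (m+1) f (by omega)
  intro d hd
  have : d < m + 1 := Nat.digits_lt_base (by omega) hd
  exact le_f' m f hf hf0 d (by omega)

theorem cantor_integers_append_tail_m (m : ℕ) (hm : 1 ≤ m) (f : ℕ → ℕ)
    (hf : ∀ i j, i < j → j ≤ m → f i < f j) (hf0 : f 0 = 0) (hfm : m < f m)
    (α : ℝ) (hα : α = Real.log (f m + 1) / Real.log (m + 1))
    (n : ℕ) (hn : 1 ≤ n) :
    Antitone (fun k : ℕ =>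
      (cantorC m f (n * (m + 1) ^ k + (m + 1) ^ k - 1) : ℝ) /
        ((n * (m + 1) ^ k + (m + 1) ^ k - 1 : ℕ) : ℝ) ^ α) ∧
    Filter.Tendsto (fun k : ℕ =>
      (cantorC m f (n * (m + 1) ^ k + (m + 1) ^ k - 1) : ℝ) /
        ((n * (m + 1) ^ k + (m + 1) ^ k - 1 : ℕ) : ℝ) ^ α)
      Filter.atTop (nhds (((cantorC m f n : ℝ) + 1) / ((n : ℝ) + 1) ^ α)) := by
  set c : ℕ := cantorC m f n with hc
  have hm1 : (1:ℝ) ≤ (m:ℝ) := by exact_mod_cast hm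
  have hBpos : (0:ℝ) < (m:ℝ) + 1 := by linarith
  have hB1 : (1:ℝ) < (m:ℝ) + 1 := by linarith
  have hFB : (m:ℝ) + 1 ≤ (f m : ℝ) + 1 := by
    have : (m:ℝ) ≤ (f m : ℝ) := by exact_mod_cast le_of_lt hfm
    linarith
  have hlogB : 0 < Real.log ((m:ℝ) + 1) := Real.log_pos hB1
  have hα1 : 1 ≤ α := by
    rw [hα]
    rw [le_div_iff₀ hlogB, one_mul]
    exact Real.log_le_log (by linarith) hFB
  have hα0 : 0 < α := by linarith
  have hBα : ((m:ℝ) + 1) ^ α = (f m : ℝ) + 1 := by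
    have hmul : α * Real.log ((m:ℝ) + 1) = Real.log ((f m : ℝ) + 1) := by
      rw [hα]; field_simp
    rw [Real.rpow_def_of_pos hBpos, mul_comm, hmul,
      Real.exp_log (by linarith : (0:ℝ) < (f m : ℝ) + 1)]
  have hn1 : (1:ℝ) ≤ (n:ℝ) := by exact_mod_cast hn
  have hcn : (n:ℝ) ≤ (c:ℝ) := by exact_mod_cast n_le_cantorC m hm f hf hf0 hfm n
  -- rewrite the function
  have hfun : (fun k : ℕ =>
      (cantorC m f (n * (m + 1) ^ k + (m + 1) ^ k - 1) : ℝ) /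
        ((n * (m + 1) ^ k + (m + 1) ^ k - 1 : ℕ) : ℝ) ^ α)
      = (fun t : ℝ => (((c:ℝ)+1) * t ^ α - 1) / (((n:ℝ)+1)*t - 1) ^ α) ∘
        (fun k : ℕ => ((m:ℝ) + 1) ^ k) := by
    funext k
    have hpow1 : 1 ≤ (m+1)^k := Nat.one_le_pow _ _ (by omega)
    have hFpow1 : 1 ≤ (f m + 1)^k * (c + 1) :=
      Nat.one_le_iff_ne_zero.mpr (by positivity)
    have harg : n * (m + 1) ^ k + (m + 1) ^ k = (n+1)*(m+1)^k := by ring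
    have hkey := cantorC_key m hm f hfm n k
    have hnum : (cantorC m f (n * (m + 1) ^ k + (m + 1) ^ k - 1) : ℝ)
        = ((c:ℝ) + 1) * ((f m : ℝ) + 1) ^ k - 1 := by
      rw [harg]
      have : ((cantorC m f ((n+1)*(m+1)^k - 1) : ℕ) : ℝ) + 1
          = ((f m : ℝ) + 1) ^ k * ((c:ℝ) + 1) := by
        rw [← hc] at hkey
        exact_mod_cast congrArg (Nat.cast : ℕ → ℝ) hkey
      nlinarith [this]
    have hden : ((n * (m + 1) ^ k + (m + 1) ^ k - 1 : ℕ) : ℝ)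
        = ((n:ℝ)+1) * ((m:ℝ) + 1) ^ k - 1 := by
      rw [Nat.cast_sub (by omega)]
      push_cast
      ring
    have hpowα : (((m:ℝ) + 1) ^ k) ^ α = ((f m : ℝ) + 1) ^ k := by
      rw [← Real.rpow_natCast ((m:ℝ)+1) k, ← Real.rpow_mul (le_of_lt hBpos),
        mul_comm, Real.rpow_mul (le_of_lt hBpos), hBα, Real.rpow_natCast]
    simp only [Function.comp_apply]
    rw [hnum, hden, hpowα]
  rw [hfun]
  constructor
  · intro j k hjk
    simp only [Function.comp_apply]
    exact rfun_antitoneOn (c:ℝ) (n:ℝ) α hα1 hn1 hcn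
      (Set.mem_Ici.mpr (one_le_pow₀ (le_of_lt hB1)))
      (Set.mem_Ici.mpr (one_le_pow₀ (le_of_lt hB1)))
      (pow_le_pow_right₀ (le_of_lt hB1) hjk)
  · have hlim := rfun_tendsto (c:ℝ) (n:ℝ) α hα0 hn1
    exact hlim.comp (tendsto_pow_atTop_atTop_of_one_lt hB1)
end

section
/- Let C be the Cantor-integer sequence for strictly increasing f : {0,...,m} → ℕ with f(0)=0, f(m)>m, and α = log(f(m)+1)/log(m+1). There exists k₁ ∈ ℕ such that for every n ≥ (m+1)^{k₁}, the finite sequence ε ↦ C((m+1)n+ε)/((m+1)n+ε)^α is strictly decreasing for ε ∈ {0,1,...,m}. -/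
/-! Writing `N = (m+1)n + ε`, the base-`(m+1)` digits give `C(N) = f(ε) + (f(m)+1) C(n)`.
Since `α ≥ 1`, it suffices that `C(N)/N` decreases in `ε`; cross-multiplied, the change of the
last digit is at most `f(m)`, so this reduces to `f(m) N < (f(m)+1) C(n)`, i.e. to `C(n)/n` being
large. That holds eventually because `C(n) ≥ (f(m)+1)^(log_{m+1} n)` and `f(m)+1 > m+1`. -/

open Filter

lemma cantorC_mul_add {m : ℕ} (hm : 0 < m) (f : ℕ → ℕ) {n ε : ℕ} (hn : 0 < n) (hε : ε ≤ m) :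
    cantorC m f ((m + 1) * n + ε) = f ε + (f m + 1) * cantorC m f n := by
  have hmod : ((m + 1) * n + ε) % (m + 1) = ε := by
    rw [Nat.mul_add_mod, Nat.mod_eq_of_lt (by omega)]
  have hdiv : ((m + 1) * n + ε) / (m + 1) = n := by
    rw [Nat.mul_add_div (by omega), Nat.div_eq_of_lt (by omega), add_zero]
  rw [cantorC, Nat.digits_def' (by omega) (by positivity), hmod, hdiv, List.map_cons,
    Nat.ofDigits_cons, cantorC]

/-- The leading digit of `n` is nonzero, so that of `cantorC m f n` is positive. -/
lemma pow_log_le_cantorC {m : ℕ} (hm : 0 < m) {f : ℕ → ℕ} (hf : ∀ i, 0 < i → i ≤ m → 0 < f i)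
    {n : ℕ} (hn : n ≠ 0) : (f m + 1) ^ Nat.log (m + 1) n ≤ cantorC m f n := by
  set L := (Nat.digits (m + 1) n).map f
  have hL : L ≠ [] := by simpa [L] using Nat.digits_ne_nil_iff_ne_zero.mpr hn
  have hlast : L.getLast hL ≠ 0 := by
    rw [List.getLast_map]
    have hd := Nat.getLast_digit_ne_zero (m + 1) hn
    have hdm := Nat.digits_lt_base (m := n) (by omega : 1 < m + 1)
      (List.getLast_mem (Nat.digits_ne_nil_iff_ne_zero.mpr hn))
    exact (hf _ (Nat.pos_of_ne_zero hd) (by omega)).ne'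
  obtain ⟨b, hb⟩ : ∃ b, f m + 1 = b + 2 := ⟨f m - 1, by have := hf m hm le_rfl; omega⟩
  have hlen : L.length = Nat.log (m + 1) n + 1 := by
    rw [List.length_map, Nat.length_digits _ _ (by omega) hn]
  have hpow := Nat.pow_length_le_mul_ofDigits (b := b) hL hlast
  rw [hlen, pow_succ'] at hpow
  rw [cantorC, hb]
  exact Nat.le_of_mul_le_mul_left hpow (by omega)

lemma eventually_mul_pow_le_pow {a b : ℕ} (hab : a < b) (c : ℕ) :
    ∀ᶠ j in atTop, c * a ^ j ≤ b ^ j := by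
  have hb : (0 : ℝ) < b := by exact_mod_cast (Nat.zero_le a).trans_lt hab
  have hratio : Tendsto (fun j : ℕ => (c : ℝ) * ((a : ℝ) / b) ^ j) atTop (nhds 0) := by
    simpa using (tendsto_pow_atTop_nhds_zero_of_lt_one (by positivity)
      ((div_lt_one hb).mpr (by exact_mod_cast hab))).const_mul (c : ℝ)
  filter_upwards [hratio.eventually_le_const zero_lt_one] with j hj
  rw [div_pow, mul_div_assoc', div_le_one (pow_pos hb j)] at hj
  exact_mod_cast hj

lemma exists_mul_lt_cantorC {m : ℕ} (hm : 0 < m) {f : ℕ → ℕ}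
    (hf : ∀ i, 0 < i → i ≤ m → 0 < f i) (hfm : m < f m) :
    ∃ k, ∀ n, (m + 1) ^ k ≤ n → f m * ((m + 1) * n + m) < (f m + 1) * cantorC m f n := by
  obtain ⟨J, hJ⟩ :=
    (eventually_mul_pow_le_pow (by omega : m + 1 < f m + 1) (f m * (m + 1))).exists_forall_of_atTop
  refine ⟨J, fun n hn => ?_⟩
  have hn0 : n ≠ 0 := Nat.pos_iff_ne_zero.mp ((Nat.one_le_pow _ _ (by omega)).trans hn)
  set j := Nat.log (m + 1) n
  have hJj : J ≤ j := Nat.le_log_of_pow_le (by omega) hn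
  have hnj : n + 1 ≤ (m + 1) ^ (j + 1) := Nat.lt_pow_succ_log_self (by omega) n
  calc f m * ((m + 1) * n + m) < f m * (m + 1) * (m + 1) ^ (j + 1) := by
        rw [mul_assoc]
        exact Nat.mul_lt_mul_of_pos_left (by nlinarith) (by omega)
    _ ≤ (f m + 1) ^ (j + 1) := hJ (j + 1) (by omega)
    _ = (f m + 1) * (f m + 1) ^ j := pow_succ' _ _
    _ ≤ (f m + 1) * cantorC m f n := Nat.mul_le_mul_left _ (pow_log_le_cantorC hm hf hn0)

/-- Cross-multiplied, the last digit `f ε₂ ≤ f m` is dominated by the extra copy of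
`(f m + 1) * cantorC m f n` that `ε₂ > ε₁` contributes. -/
lemma cantorC_mul_lt_mul {m : ℕ} (hm : 0 < m) {f : ℕ → ℕ} {n ε₁ ε₂ : ℕ} (hn : 0 < n)
    (hgrowth : f m * ((m + 1) * n + m) < (f m + 1) * cantorC m f n)
    (h₁₂ : ε₁ < ε₂) (hε₂ : ε₂ ≤ m) (hfε : f ε₂ ≤ f m) :
    cantorC m f ((m + 1) * n + ε₂) * ((m + 1) * n + ε₁) <
      cantorC m f ((m + 1) * n + ε₁) * ((m + 1) * n + ε₂) := by
  rw [cantorC_mul_add hm f hn hε₂, cantorC_mul_add hm f hn (by omega)]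
  set A := (f m + 1) * cantorC m f n
  set N := (m + 1) * n
  have hdigit : f ε₂ * (N + ε₁) ≤ f m * (N + m) := Nat.mul_le_mul hfε (by omega)
  have hshift : A * (N + ε₁) + A ≤ A * (N + ε₂) := by nlinarith
  have hε : f ε₁ * (N + ε₁) ≤ f ε₁ * (N + ε₂) := Nat.mul_le_mul_left _ (by omega)
  nlinarith

lemma div_rpow_lt_div_rpow {a b c d α : ℝ} (ha : 0 < a) (hab : a ≤ b) (hα : 1 ≤ α)
    (hc : 0 ≤ c) (h : c * a < d * b) : c / b ^ α < d / a ^ α := by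
  have hb : 0 < b := ha.trans_le hab
  rw [div_lt_div_iff₀ (Real.rpow_pos_of_pos hb α) (Real.rpow_pos_of_pos ha α)]
  have hpow : a ^ (α - 1) ≤ b ^ (α - 1) := Real.rpow_le_rpow ha.le hab (by linarith)
  have hsplit : ∀ x : ℝ, 0 < x → x ^ α = x * x ^ (α - 1) := fun x hx => by
    rw [Real.rpow_sub_one hx.ne', mul_div_cancel₀ _ hx.ne']
  rw [hsplit a ha, hsplit b hb]
  calc c * (a * a ^ (α - 1)) ≤ c * a * b ^ (α - 1) := by
        rw [← mul_assoc]; exact mul_le_mul_of_nonneg_left hpow (by positivity)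
    _ < d * b * b ^ (α - 1) := mul_lt_mul_of_pos_right h (Real.rpow_pos_of_pos hb _)
    _ = d * (b * b ^ (α - 1)) := mul_assoc _ _ _

theorem cantor_integers_eventually_strictly_decreasing_digits_general (m : ℕ) (hm : 1 ≤ m)
    (f : ℕ → ℕ) (hf : ∀ i j, i < j → j ≤ m → f i < f j) (hfm : m < f m)
    (α : ℝ) (hα : α = Real.log (f m + 1) / Real.log (m + 1)) :
    ∃ k₁ : ℕ, ∀ n : ℕ, (m + 1) ^ k₁ ≤ n →
      ∀ ε₁ ε₂ : ℕ, ε₁ < ε₂ → ε₂ ≤ m →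
        (cantorC m f ((m + 1) * n + ε₂) : ℝ) / (((m + 1) * n + ε₂ : ℕ) : ℝ) ^ α <
          (cantorC m f ((m + 1) * n + ε₁) : ℝ) / (((m + 1) * n + ε₁ : ℕ) : ℝ) ^ α := by
  have hfpos : ∀ i, 0 < i → i ≤ m → 0 < f i := fun i hi him =>
    (Nat.zero_le _).trans_lt (hf 0 i hi him)
  have hα₁ : 1 ≤ α := by
    have hm₁ : (1 : ℝ) < m + 1 := by norm_cast; omega
    rw [hα, one_le_div (Real.log_pos hm₁)]
    exact Real.log_le_log (by positivity) (by norm_cast; omega)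
  obtain ⟨k₁, hk₁⟩ := exists_mul_lt_cantorC hm hfpos hfm
  refine ⟨k₁, fun n hn ε₁ ε₂ h₁₂ hε₂ => ?_⟩
  have hn0 : 0 < n := (Nat.one_le_pow _ _ (by omega)).trans hn
  have hfε : f ε₂ ≤ f m := by
    rcases hε₂.eq_or_lt with h | h
    · rw [h]
    · exact (hf _ _ h le_rfl).le
  have hmul := cantorC_mul_lt_mul hm hn0 (hk₁ n hn) h₁₂ hε₂ hfε
  exact div_rpow_lt_div_rpow (by positivity) (by norm_cast; omega) hα₁ (Nat.cast_nonneg _)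
    (by exact_mod_cast hmul)

theorem cantor_integers_eventually_strictly_decreasing_digits (m : ℕ) (hm : 1 ≤ m)
    (f : ℕ → ℕ) (hf : ∀ i j, i < j → j ≤ m → f i < f j) (hf0 : f 0 = 0) (hfm : m < f m)
    (α : ℝ) (hα : α = Real.log (f m + 1) / Real.log (m + 1)) :
    ∃ k₁ : ℕ, ∀ n : ℕ, (m + 1) ^ k₁ ≤ n →
      ∀ ε₁ ε₂ : ℕ, ε₁ < ε₂ → ε₂ ≤ m →
        (cantorC m f ((m + 1) * n + ε₂) : ℝ) / (((m + 1) * n + ε₂ : ℕ) : ℝ) ^ α <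
          (cantorC m f ((m + 1) * n + ε₁) : ℝ) / (((m + 1) * n + ε₁ : ℕ) : ℝ) ^ α :=
  cantor_integers_eventually_strictly_decreasing_digits_general m hm f hf hfm α hα
end

section
/- Let C be the Cantor-integer sequence for strictly increasing f with f(0)=0, f(m)>m, and α = log(f(m)+1)/log(m+1). Then limsup_{n→∞} C(n)/n^α = sup_{n≥1} C(n)/n^α and liminf_{n→∞} C(n)/n^α = inf_{n≥1} C(n)/n^α. -/
open Filter Set

section FrequentValues

variable {ι β : Type*} [ConditionallyCompleteLinearOrder β] {l : Filter ι} [l.NeBot]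
  {u : ι → β} {s : Set ι}

theorem limsup_eq_csSup_image_of_frequently_eq (hs : s ∈ l) (hbdd : BddAbove (u '' s))
    (hfreq : ∀ i ∈ s, ∃ᶠ j in l, u j = u i) : limsup u l = sSup (u '' s) := by
  obtain ⟨i₀, hi₀⟩ := l.nonempty_of_mem hs
  apply le_antisymm
  · refine limsup_le_of_le ?_ (mem_of_superset hs fun i hi => le_csSup hbdd ⟨i, hi, rfl⟩)
    exact IsCoboundedUnder.of_frequently_ge ((hfreq i₀ hi₀).mono fun _ h => h.ge)
  · refine csSup_le ⟨u i₀, mem_image_of_mem u hi₀⟩ (forall_mem_image.2 fun i hi => ?_)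
    exact le_limsup_of_frequently_le ((hfreq i hi).mono fun _ h => h.ge) (hbdd.isBoundedUnder hs)

theorem liminf_eq_csInf_image_of_frequently_eq (hs : s ∈ l) (hbdd : BddBelow (u '' s))
    (hfreq : ∀ i ∈ s, ∃ᶠ j in l, u j = u i) : liminf u l = sInf (u '' s) :=
  limsup_eq_csSup_image_of_frequently_eq (β := βᵒᵈ) hs hbdd hfreq

end FrequentValues

theorem Real.pow_rpow_logb {b x : ℝ} (hb : 0 < b) (hb₁ : b ≠ 1) (hx : 0 < x) (k : ℕ) :
    (b ^ k) ^ Real.logb b x = x ^ k := by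
  rw [← Real.rpow_pow_comm hb.le, Real.rpow_logb hb hb₁ hx]

section CantorIntegers

variable {m : ℕ} {f : ℕ → ℕ}

theorem cantorC_base_pow_mul (hm : 1 ≤ m) (hf0 : f 0 = 0) (k n : ℕ) :
    cantorC m f ((m + 1) ^ k * n) = (f m + 1) ^ k * cantorC m f n := by
  rcases n.eq_zero_or_pos with rfl | hn
  · simp [cantorC]
  · simp [cantorC, Nat.digits_base_pow_mul (by omega : 1 < m + 1) hn, Nat.ofDigits_append, hf0]

theorem cantorC_lt_pow_length (hm : 1 ≤ m) (hfm : 0 < f m) (hfle : ∀ d ≤ m, f d ≤ f m)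
    (n : ℕ) :
    cantorC m f n < (f m + 1) ^ (Nat.digits (m + 1) n).length := by
  have hdigit : ∀ x ∈ (Nat.digits (m + 1) n).map f, x < f m + 1 := by
    simp only [List.mem_map]
    rintro _ ⟨d, hd, rfl⟩
    exact Nat.lt_succ_of_le (hfle d (Nat.le_of_lt_succ (Nat.digits_lt_base (by omega) hd)))
  simpa [cantorC] using Nat.ofDigits_lt_base_pow_length (by omega) hdigit


noncomputable def cantorRatio (m : ℕ) (f : ℕ → ℕ) (n : ℕ) : ℝ :=
  cantorC m f n / (n : ℝ) ^ Real.logb (m + 1) (f m + 1)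

theorem cantorRatio_nonneg (n : ℕ) : 0 ≤ cantorRatio m f n := by
  unfold cantorRatio
  positivity

theorem cantorRatio_base_pow_mul (hm : 1 ≤ m) (hf0 : f 0 = 0) (k n : ℕ) :
    cantorRatio m f ((m + 1) ^ k * n) = cantorRatio m f n := by
  unfold cantorRatio
  rw [cantorC_base_pow_mul hm hf0]
  push_cast
  rw [Real.mul_rpow (by positivity) (by positivity),
    Real.pow_rpow_logb (by positivity) (by norm_cast; omega) (by positivity),
    mul_div_mul_left _ _ (by positivity)]

theorem cantorRatio_lt (hm : 1 ≤ m) (hfm : 0 < f m) (hfle : ∀ d ≤ m, f d ≤ f m) {n : ℕ}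
    (hn : n ≠ 0) : cantorRatio m f n < f m + 1 := by
  set L := (Nat.digits (m + 1) n).length
  have hlen : (m + 1) ^ L ≤ (m + 1) * n := Nat.base_pow_length_digits_le _ _ (by omega) hn
  have hexp : 0 ≤ Real.logb (m + 1) (f m + 1) :=
    Real.logb_nonneg (by norm_cast; omega) (by norm_cast; omega)
  rw [cantorRatio, div_lt_iff₀ (by positivity)]
  calc (cantorC m f n : ℝ) < ((f m : ℝ) + 1) ^ L := by
        exact_mod_cast cantorC_lt_pow_length hm hfm hfle n
    _ = (((m : ℝ) + 1) ^ L) ^ Real.logb (m + 1) (f m + 1) := by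
        rw [Real.pow_rpow_logb (by positivity) (by norm_cast; omega) (by positivity)]
    _ ≤ (((m : ℝ) + 1) * n) ^ Real.logb (m + 1) (f m + 1) := by gcongr; exact_mod_cast hlen
    _ = (f m + 1) * (n : ℝ) ^ Real.logb (m + 1) (f m + 1) := by
        rw [Real.mul_rpow (by positivity) (by positivity),
          Real.rpow_logb (by positivity) (by norm_cast; omega) (by positivity)]

theorem frequently_cantorRatio_eq (hm : 1 ≤ m) (hf0 : f 0 = 0) {n : ℕ} (hn : n ≠ 0) :
    ∃ᶠ k in atTop, cantorRatio m f k = cantorRatio m f n :=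
  (tendsto_atTop_mono (fun k => Nat.le_mul_of_pos_right _ (Nat.pos_of_ne_zero hn))
    (tendsto_pow_atTop_atTop_of_one_lt (by omega : 1 < m + 1))).frequently
    (Frequently.of_forall fun k => cantorRatio_base_pow_mul hm hf0 k n)

end CantorIntegers

theorem cantor_integers_limsup_liminf (m : ℕ) (hm : 1 ≤ m) (f : ℕ → ℕ)
    (hf : ∀ i j, i < j → j ≤ m → f i < f j) (hf0 : f 0 = 0) (hfm : m < f m)
    (α : ℝ) (hα : α = Real.log (f m + 1) / Real.log (m + 1)) :
    Filter.limsup (fun n : ℕ => (cantorC m f n : ℝ) / (n : ℝ) ^ α) Filter.atTop =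
        sSup {x : ℝ | ∃ n : ℕ, 1 ≤ n ∧ x = (cantorC m f n : ℝ) / (n : ℝ) ^ α} ∧
      Filter.liminf (fun n : ℕ => (cantorC m f n : ℝ) / (n : ℝ) ^ α) Filter.atTop =
        sInf {x : ℝ | ∃ n : ℕ, 1 ≤ n ∧ x = (cantorC m f n : ℝ) / (n : ℝ) ^ α} := by
  obtain rfl : α = Real.logb (m + 1) (f m + 1) := hα
  have hfle : ∀ d ≤ m, f d ≤ f m := fun d hd =>
    hd.lt_or_eq.elim (fun h => (hf d m h le_rfl).le) fun h => h ▸ le_rfl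
  have hvals : {x | ∃ n : ℕ, 1 ≤ n ∧ x = cantorRatio m f n} = cantorRatio m f '' Ici 1 := by
    ext
    simp [eq_comm]
  have hfreq (n : ℕ) (hn : n ∈ Ici 1) :
      ∃ᶠ k in atTop, cantorRatio m f k = cantorRatio m f n :=
    frequently_cantorRatio_eq hm hf0 (Nat.one_le_iff_ne_zero.1 hn)
  have hbddAbove : BddAbove (cantorRatio m f '' Ici 1) :=
    ⟨f m + 1, forall_mem_image.2 fun n hn =>
      (cantorRatio_lt hm (by omega) hfle (Nat.one_le_iff_ne_zero.1 hn)).le⟩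
  have hbddBelow : BddBelow (cantorRatio m f '' Ici 1) :=
    ⟨0, forall_mem_image.2 fun n _ => cantorRatio_nonneg n⟩
  exact hvals ▸ ⟨limsup_eq_csSup_image_of_frequently_eq (Ici_mem_atTop 1) hbddAbove hfreq,
    liminf_eq_csInf_image_of_frequently_eq (Ici_mem_atTop 1) hbddBelow hfreq⟩
end

section
/- Let m ≥ 2, and f(x) = a x² + b x with integer a, b satisfying 2ax + b > 0 for all x ∈ [1,m], f(0)=0, f(m) > m. If moreover 1 < α := log(f(m)+1)/log(m+1) < 2 and a < 0, then a = −1 and b ∈ {2m, 2m+1}. -/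
theorem quadratic_conversion_negative_leading (m : ℕ) (hm : 2 ≤ m) (a b : ℤ)
    (hderiv : ∀ x : ℝ, 1 ≤ x → x ≤ m → 0 < 2 * (a : ℝ) * x + b)
    (hnat : ∀ x : ℕ, x ≤ m → 0 ≤ a * (x : ℤ) ^ 2 + b * x)
    (hfm : (m : ℤ) < a * (m : ℤ) ^ 2 + b * m)
    (α : ℝ) (hα : α = Real.log ((a * (m : ℤ) ^ 2 + b * m : ℤ) + 1 : ℝ) / Real.log (m + 1))
    (hα1 : 1 < α) (hα2 : α < 2) (ha : a < 0) :
    a = -1 ∧ (b = 2 * m ∨ b = 2 * m + 1) := by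
  have hm2 : (2:ℤ) ≤ (m:ℤ) := by exact_mod_cast hm
  have hmR : (2:ℝ) ≤ (m:ℝ) := by exact_mod_cast hm
  -- derivative at x = m
  have hdm := hderiv (m:ℝ) (by linarith) le_rfl
  have hb : (1:ℤ) ≤ 2*a*(m:ℤ) + b := by
    have : (0:ℤ) < 2*a*(m:ℤ) + b := by exact_mod_cast hdm
    linarith
  -- positivity of F+1
  have hFpos : (0:ℝ) < ((a * (m : ℤ) ^ 2 + b * m : ℤ) + 1 : ℝ) := by
    have : (0:ℤ) < a * (m : ℤ) ^ 2 + b * m + 1 := by linarith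
    exact_mod_cast this
  have hlogpos : 0 < Real.log ((m:ℝ) + 1) := Real.log_pos (by linarith)
  -- from α < 2 : F + 1 < (m+1)^2
  have hlt : ((a * (m : ℤ) ^ 2 + b * m : ℤ) + 1 : ℝ) < ((m:ℝ) + 1)^2 := by
    rw [hα, div_lt_iff₀ hlogpos] at hα2
    have h2 : Real.log (((m:ℝ)+1)^2) = 2 * Real.log ((m:ℝ)+1) := by
      rw [Real.log_pow]; push_cast; ring
    have := hα2
    rw [← h2] at this
    exact (Real.log_lt_log_iff hFpos (by positivity)).mp this
  have key : a * (m:ℤ) ^ 2 + b * m ≤ (m:ℤ)^2 + 2*m - 1 := by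
    have : (a * (m : ℤ) ^ 2 + b * m : ℤ) + 1 < ((m:ℤ) + 1)^2 := by exact_mod_cast hlt
    nlinarith [this]
  have ha1 : a = -1 := by
    by_contra h
    have ha2 : a ≤ -2 := by omega
    have hbm : (m:ℤ) * 1 ≤ (m:ℤ) * (2*a*(m:ℤ) + b) :=
      mul_le_mul_of_nonneg_left hb (by linarith)
    nlinarith [sq_nonneg ((m:ℤ)), hbm, key, hm2, mul_le_mul_of_nonneg_right (show a + 2 ≤ 0 by linarith) (sq_nonneg (m:ℤ))]
  subst ha1
  have hbge : 2*(m:ℤ) + 1 ≤ b := by linarith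
  have hble : b ≤ 2*(m:ℤ) + 1 := by
    by_contra h
    have h2 : 2*(m:ℤ) + 2 ≤ b := by omega
    nlinarith [key, hm2, mul_le_mul_of_nonneg_right h2 (show (0:ℤ) ≤ m by linarith)]
  exact ⟨rfl, Or.inr (by omega)⟩
end

section
/- Let m ≥ 2, f(x) = ax² + bx with a,b ∈ ℤ, 2ax+b > 0 on [1,m], f(m)>m, and α = log(f(m)+1)/log(m+1). If a < 0, then min over x ∈ {1,...,m} of (f(x)+1)/(x+1)^α equals 1 (attained at x = m, since f(m)+1 = (m+1)^α). -/
/-!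
Since `a < 0` and `f(0) = 0`, the concave parabola `f` lies above its chord from `0` to `m`,
so `f(x) ≥ (x/m) f(m)`. On the other side, `α ≥ 1` because `f(m) > m`, so `s ↦ s ^ α` is
convex, and interpolating between `1 = 1 ^ α` and `f(m) + 1 = (m + 1) ^ α` gives
`(x + 1) ^ α ≤ 1 + (x/m) f(m) ≤ f(x) + 1`.
-/

open Real

lemma mul_quadratic_le_mul_quadratic {R : Type*} [CommRing R] [LinearOrder R]
    [IsStrictOrderedRing R] {a b x m : R} (ha : a ≤ 0) (hx : 0 ≤ x) (hxm : x ≤ m) :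
    x * (a * m ^ 2 + b * m) ≤ m * (a * x ^ 2 + b * x) := by
  have hprod : 0 ≤ -a * (x * m * (m - x)) :=
    mul_nonneg (neg_nonneg.mpr ha) (mul_nonneg (mul_nonneg hx (hx.trans hxm)) (sub_nonneg.mpr hxm))
  linear_combination hprod

lemma one_le_logb_of_le {b y : ℝ} (hb : 1 < b) (hby : b ≤ y) : 1 ≤ logb b y := by
  rw [le_logb_iff_rpow_le hb (by linarith), rpow_one]
  exact hby

lemma add_one_rpow_le_of_mul_le {m x F y : ℝ} (hm : 0 < m) (hx : 0 ≤ x) (hxm : x ≤ m)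
    (hmF : m ≤ F) (hxy : x * F ≤ m * y) :
    (x + 1) ^ logb (m + 1) (F + 1) ≤ y + 1 := by
  set α := logb (m + 1) (F + 1)
  have hα : 1 ≤ α := one_le_logb_of_le (by linarith) (by linarith)
  have hmα : (m + 1) ^ α = F + 1 := rpow_logb (by linarith) (by linarith) (by linarith)
  set t := x / m
  have ht0 : 0 ≤ t := div_nonneg hx hm.le
  have ht1 : t ≤ 1 := (div_le_one hm).mpr hxm
  have htm : t * m = x := div_mul_cancel₀ x hm.ne'
  have hconv := (convexOn_rpow hα).2 (Set.mem_Ici.mpr zero_le_one)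
    (Set.mem_Ici.mpr (by linarith : (0 : ℝ) ≤ m + 1)) (sub_nonneg.mpr ht1) ht0
    (sub_add_cancel 1 t)
  simp only [smul_eq_mul, one_rpow, mul_one, hmα] at hconv
  have htF : t * F ≤ y := le_of_mul_le_mul_left (by rw [← htm] at hxy; linarith) hm
  calc (x + 1) ^ α = ((1 - t) + t * (m + 1)) ^ α := by rw [← htm]; ring_nf
    _ ≤ (1 - t) + t * (F + 1) := hconv
    _ ≤ y + 1 := by linarith

theorem quadratic_conversion_min_neg_leading_general (m : ℕ) (a b : ℤ)
    (hfm : (m : ℤ) < a * (m : ℤ) ^ 2 + b * m)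
    (α : ℝ) (hα : α = Real.log ((a * (m : ℤ) ^ 2 + b * m : ℤ) + 1 : ℝ) / Real.log (m + 1))
    (ha : a < 0) :
    IsLeast {y : ℝ | ∃ x : ℕ, 1 ≤ x ∧ x ≤ m ∧
      y = ((a * (x : ℤ) ^ 2 + b * x : ℤ) + 1 : ℝ) / ((x : ℝ) + 1) ^ α} 1 := by
  rw [log_div_log] at hα
  subst hα
  have hm : 1 ≤ m := Nat.pos_of_ne_zero (by rintro rfl; simp at hfm)
  have hmr : (0 : ℝ) < m := by exact_mod_cast hm
  have hmF : (m : ℝ) < ((a * (m : ℤ) ^ 2 + b * m : ℤ) : ℝ) := by exact_mod_cast hfm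
  refine ⟨⟨m, hm, le_rfl, ?_⟩, ?_⟩
  · rw [rpow_logb (by linarith) (by linarith) (by linarith), div_self (by linarith)]
  · rintro _ ⟨x, -, hxm, rfl⟩
    have hxm' : (x : ℝ) ≤ m := by exact_mod_cast hxm
    have hchord := mul_quadratic_le_mul_quadratic (b := (b : ℝ))
      (Int.cast_nonpos.mpr ha.le) (Nat.cast_nonneg x) hxm'
    rw [one_le_div (rpow_pos_of_pos (by positivity) _)]
    push_cast at hmF ⊢
    exact add_one_rpow_le_of_mul_le hmr (Nat.cast_nonneg x) hxm' hmF.le hchord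

theorem quadratic_conversion_min_neg_leading (m : ℕ) (hm : 2 ≤ m) (a b : ℤ)
    (hderiv : ∀ x : ℝ, 1 ≤ x → x ≤ m → 0 < 2 * (a : ℝ) * x + b)
    (hnat : ∀ x : ℕ, x ≤ m → 0 ≤ a * (x : ℤ) ^ 2 + b * x)
    (hfm : (m : ℤ) < a * (m : ℤ) ^ 2 + b * m)
    (α : ℝ) (hα : α = Real.log ((a * (m : ℤ) ^ 2 + b * m : ℤ) + 1 : ℝ) / Real.log (m + 1))
    (ha : a < 0) :
    IsLeast {y : ℝ | ∃ x : ℕ, 1 ≤ x ∧ x ≤ m ∧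
      y = ((a * (x : ℤ) ^ 2 + b * x : ℤ) + 1 : ℝ) / ((x : ℝ) + 1) ^ α} 1 :=
  quadratic_conversion_min_neg_leading_general m a b hfm α hα ha
end

section
/- Let D : [0,1] → ℝ be defined by D(x) = Σ_{r≥1} f(ε_r)·(f(m)+1)^{−r} where x = Σ_{r≥1} ε_r (m+1)^{−r} is the base-(m+1) expansion of x (excluding expansions ending in all m's), for strictly increasing f : {0,...,m} → ℕ with f(0)=0 and f(m)>m. Then D is strictly increasing on [0,1]. -/
/-- The `r`-th digit of the canonical base-`(m+1)` expansion of `x ∈ [0,1)`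
(the floor-based expansion, which never ends in an infinite tail of digit `m`). -/
noncomputable def digitD (m : ℕ) (x : ℝ) (r : ℕ) : ℕ :=
  (⌊x * (m + 1) ^ r⌋).toNat % (m + 1)

/-- `D(x) = Σ_{r ≥ 1} f(ε_r) (f(m)+1)^{-r}` where `x = Σ_{r ≥ 1} ε_r (m+1)^{-r}` is the
canonical expansion; `x = 1` uses the expansion `0.mmm…`, giving `D(1) = 1`. -/
noncomputable def cantorD (m : ℕ) (f : ℕ → ℕ) (x : ℝ) : ℝ :=
  if x = 1 then 1
  else ∑' r : ℕ, (f (digitD m x (r + 1)) : ℝ) / ((f m : ℝ) + 1) ^ (r + 1)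

/-!
Canonical digit sequences of reals in `[0, 1)` never end in a tail of maximal digits, so they
are ordered lexicographically like the reals themselves. A strictly increasing digit map
preserves both the lexicographic order and the absence of a maximal tail; and a digit sequence
without maximal tail has strictly smaller value than any lexicographically larger one, since
after the first differing place its tail is worth strictly less than one unit of that place.
-/

theorem StrictMono.val_add_one_lt {b c : ℕ} {g : Fin b → Fin c} (hg : StrictMono g) {d : Fin b}
    (hd : (d : ℕ) + 1 < b) : (g d : ℕ) + 1 < c := by
  have hlt : g d < g ⟨b - 1, by omega⟩ := hg (Fin.lt_def.mpr (by simp only; omega))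
  have := (g ⟨b - 1, by omega⟩).isLt
  rw [Fin.lt_def] at hlt
  omega

namespace Real

variable {b : ℕ}

theorem ofDigits_lt_one {a : ℕ → Fin b} {i : ℕ} (hi : (a i : ℕ) + 1 < b) : ofDigits a < 1 := by
  have hb : 1 < b := by omega
  rw [← ofDigits_const_last_eq_one' hb]
  refine Summable.tsum_lt_tsum (i := i) (fun n => ?_) ?_ summable_ofDigitsTerm
    summable_ofDigitsTerm
  · simpa [ofDigitsTerm, Nat.cast_sub hb.le] using ofDigitsTerm_le (digits := a) (n := n)
  · simp only [ofDigitsTerm]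
    gcongr
    exact_mod_cast Nat.lt_sub_of_add_lt hi

theorem ofDigits_lt_ofDigits {a c : ℕ → Fin b} {n : ℕ} (heq : ∀ i < n, a i = c i)
    (hlt : a n < c n) {k : ℕ} (hk : n < k) (htail : (a k : ℕ) + 1 < b) :
    ofDigits a < ofDigits c := by
  have hhead : ∑ i ∈ Finset.range n, ofDigitsTerm a i = ∑ i ∈ Finset.range n, ofDigitsTerm c i :=
    Finset.sum_congr rfl fun i hi => by rw [ofDigitsTerm, ofDigitsTerm, heq i (by simpa using hi)]
  have hstep : ofDigitsTerm a n + ((b : ℝ) ^ (n + 1))⁻¹ ≤ ofDigitsTerm c n := by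
    rw [ofDigitsTerm, ofDigitsTerm, ← add_one_mul]
    gcongr
    exact_mod_cast Fin.lt_def.mp hlt
  have ha_tail : ((b : ℝ) ^ (n + 1))⁻¹ * ofDigits (fun i => a (i + (n + 1))) <
      ((b : ℝ) ^ (n + 1))⁻¹ := by
    have := (a n).pos
    refine mul_lt_of_lt_one_right (by positivity) (ofDigits_lt_one (i := k - (n + 1)) ?_)
    rwa [Nat.sub_add_cancel hk]
  have hc_tail : 0 ≤ ((b : ℝ) ^ (n + 1))⁻¹ * ofDigits (fun i => c (i + (n + 1))) :=
    mul_nonneg (by positivity) (ofDigits_nonneg _)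
  rw [ofDigits_eq_sum_add_ofDigits a (n + 1), ofDigits_eq_sum_add_ofDigits c (n + 1),
    Finset.sum_range_succ, Finset.sum_range_succ, hhead]
  linarith

variable [NeZero b] {x y : ℝ}

theorem exists_lt_digits_add_one_lt (hb : 1 < b) (hx : x ∈ Set.Ico 0 1) (n : ℕ) :
    ∃ k > n, (digits x b k : ℕ) + 1 < b := by
  by_contra! h
  have htail : ofDigits (fun i => digits x b (i + (n + 1))) = 1 := by
    rw [← ofDigits_const_last_eq_one' hb]
    congr 1
    ext i
    have := (digits x b (i + (n + 1))).isLt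
    have := h (i + (n + 1)) (by omega)
    simp only
    omega
  have hpow : (0 : ℝ) < (b : ℝ) ^ (n + 1) := by have := NeZero.pos b; positivity
  have hexp : (b : ℝ) ^ (n + 1) * x = ⌊(b : ℝ) ^ (n + 1) * x⌋₊ + 1 := by
    conv_lhs => rw [← ofDigits_digits hb hx, ofDigits_eq_sum_add_ofDigits _ (n + 1), htail,
      mul_add, ofDigits_digits_sum_eq hx, mul_one, mul_inv_cancel₀ hpow.ne']
  linarith [Nat.lt_floor_add_one ((b : ℝ) ^ (n + 1) * x)]

theorem exists_digits_lt_of_lt (hb : 1 < b) (hx : x ∈ Set.Ico 0 1) (hy : y ∈ Set.Ico 0 1)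
    (hxy : x < y) : ∃ n, (∀ i < n, digits x b i = digits y b i) ∧ digits x b n < digits y b n := by
  have hne : ∃ n, digits x b n ≠ digits y b n := Function.ne_iff.mp fun h => by
    have := congrArg ofDigits h
    rw [ofDigits_digits hb hx, ofDigits_digits hb hy] at this
    exact hxy.ne this
  have heq : ∀ i < Nat.find hne, digits x b i = digits y b i := fun i hi =>
    not_not.mp (Nat.find_min hne hi)
  refine ⟨Nat.find hne, heq, (Nat.find_spec hne).lt_or_gt.resolve_right fun hgt => ?_⟩
  obtain ⟨k, hk, htail⟩ := exists_lt_digits_add_one_lt hb hy (Nat.find hne)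
  have := ofDigits_lt_ofDigits (fun i hi => (heq i hi).symm) hgt hk htail
  rw [ofDigits_digits hb hx, ofDigits_digits hb hy] at this
  exact hxy.not_gt this

theorem ofDigits_comp_digits_lt_one {c : ℕ} (hb : 1 < b) {g : Fin b → Fin c} (hg : StrictMono g)
    (hx : x ∈ Set.Ico 0 1) : ofDigits (g ∘ digits x b) < 1 := by
  obtain ⟨k, -, hk⟩ := exists_lt_digits_add_one_lt hb hx 0
  exact ofDigits_lt_one (i := k) (hg.val_add_one_lt hk)

theorem strictMonoOn_ofDigits_comp_digits {c : ℕ} (hb : 1 < b) {g : Fin b → Fin c}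
    (hg : StrictMono g) : StrictMonoOn (fun x => ofDigits (g ∘ digits x b)) (Set.Ico 0 1) := by
  intro x hx y hy hxy
  obtain ⟨n, heq, hlt⟩ := exists_digits_lt_of_lt hb hx hy hxy
  obtain ⟨k, hk, htail⟩ := exists_lt_digits_add_one_lt hb hx n
  exact ofDigits_lt_ofDigits (fun i hi => congrArg g (heq i hi)) (hg hlt) hk
    (hg.val_add_one_lt htail)

end Real

theorem digitD_succ (m : ℕ) (x : ℝ) (r : ℕ) : digitD m x (r + 1) = Real.digits x (m + 1) r := by
  simp [digitD, Real.digits, Int.floor_toNat]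

theorem cantorD_eq_ofDigits {m : ℕ} {f : ℕ → ℕ} {g : Fin (m + 1) → Fin (f m + 1)}
    (hg : ∀ i, (g i : ℕ) = f i) {x : ℝ} (hx : x ≠ 1) :
    cantorD m f x = Real.ofDigits (g ∘ Real.digits x (m + 1)) := by
  simp [cantorD, hx, Real.ofDigits, Real.ofDigitsTerm, digitD_succ, hg, div_eq_mul_inv]

theorem exists_strictMono_fin_val_eq {m : ℕ} {f : ℕ → ℕ} (hf : StrictMonoOn f (Set.Iic m)) :
    ∃ g : Fin (m + 1) → Fin (f m + 1), StrictMono g ∧ ∀ i, (g i : ℕ) = f i :=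
  have hle (i : Fin (m + 1)) : (i : ℕ) ≤ m := Nat.le_of_lt_succ i.isLt
  ⟨fun i => ⟨f i, Nat.lt_succ_of_le (hf.monotoneOn (hle i) Set.self_mem_Iic (hle i))⟩,
    fun i j hij => hf (hle i) (hle j) hij, fun _ => rfl⟩

theorem cantorD_strictMonoOn_general (m : ℕ) (hm : 1 ≤ m) (f : ℕ → ℕ)
    (hf : ∀ i j, i < j → j ≤ m → f i < f j) :
    StrictMonoOn (cantorD m f) (Set.Icc 0 1) := by
  obtain ⟨g, hg, hgf⟩ := exists_strictMono_fin_val_eq fun i _ j hj hij => hf i j hij hj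
  have hb : 1 < m + 1 := by omega
  intro x hx y hy hxy
  have hx' : x ∈ Set.Ico 0 1 := ⟨hx.1, hxy.trans_le hy.2⟩
  rw [cantorD_eq_ofDigits hgf hx'.2.ne]
  rcases hy.2.lt_or_eq with hy1 | rfl
  · rw [cantorD_eq_ofDigits hgf hy1.ne]
    exact Real.strictMonoOn_ofDigits_comp_digits hb hg hx' ⟨hy.1, hy1⟩ hxy
  · rw [cantorD, if_pos rfl]
    exact Real.ofDigits_comp_digits_lt_one hb hg hx'

theorem cantorD_strictMonoOn (m : ℕ) (hm : 1 ≤ m) (f : ℕ → ℕ)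
    (hf : ∀ i j, i < j → j ≤ m → f i < f j) (hf0 : f 0 = 0) (hfm : m < f m) :
    StrictMonoOn (cantorD m f) (Set.Icc 0 1) :=
  cantorD_strictMonoOn_general m hm f hf
end

section
/- With D as above (D(x) = Σ f(ε_r)(f(m)+1)^{−r} for x = Σ ε_r (m+1)^{−r}), D is right continuous at every point of [0,1), and D is continuous at every x whose base-(m+1) expansion is infinite (i.e., x not of the form k/(m+1)^n). -/
/-!
Write `b = m + 1` and `q = f m + 1`. If `⌊y b^N⌋ = ⌊x b^N⌋`, then `x` and `y` share their
first `N` digits, so the series of `D x` and `D y` share their first `N` terms; the tails lie in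
`[0, q^{-N}]` because every digit `ε` has `f ε ≤ f m` and `∑_{r ≥ N} f m / q^{r+1} = q^{-N}`.
Hence `D y` is close to `D x` wherever `⌊y b^N⌋` stays constant: on a right neighbourhood of
any `x`, and on a full neighbourhood when no `x b^N` is an integer.
-/

open Filter Topology Set

section DigitSeries

variable {c : ℝ} {g : ℕ → ℝ}

lemma hasSum_div_add_one_pow_succ (hc : 0 < c) :
    HasSum (fun r : ℕ => c / (c + 1) ^ (r + 1)) 1 := by
  have hq : (c + 1)⁻¹ < 1 := inv_lt_one_of_one_lt₀ (by linarith)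
  have hterm (r : ℕ) : c / (c + 1) * (c + 1)⁻¹ ^ r = c / (c + 1) ^ (r + 1) := by
    rw [pow_succ, inv_pow]
    field_simp
  have hsum : c / (c + 1) * (1 - (c + 1)⁻¹)⁻¹ = 1 := by
    field_simp
    simp [hc.ne']
  simpa only [hterm, hsum] using
    (hasSum_geometric_of_lt_one (by positivity) hq).mul_left (c / (c + 1))

lemma div_add_one_pow_succ_le (hg0 : ∀ r, 0 ≤ g r) (hgc : ∀ r, g r ≤ c) (r : ℕ) :
    g r / (c + 1) ^ (r + 1) ≤ c / (c + 1) ^ (r + 1) := by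
  have hc : 0 ≤ c := (hg0 r).trans (hgc r)
  gcongr
  exact hgc r

lemma summable_div_add_one_pow_succ (hc : 0 < c) (hg0 : ∀ r, 0 ≤ g r) (hgc : ∀ r, g r ≤ c) :
    Summable (fun r : ℕ => g r / (c + 1) ^ (r + 1)) :=
  (hasSum_div_add_one_pow_succ hc).summable.of_nonneg_of_le
    (fun r => div_nonneg (hg0 r) (by positivity)) (div_add_one_pow_succ_le hg0 hgc)

lemma tsum_div_add_one_pow_succ_le_one (hc : 0 < c) (hg0 : ∀ r, 0 ≤ g r)
    (hgc : ∀ r, g r ≤ c) : ∑' r : ℕ, g r / (c + 1) ^ (r + 1) ≤ 1 :=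
  hasSum_le (div_add_one_pow_succ_le hg0 hgc)
    (summable_div_add_one_pow_succ hc hg0 hgc).hasSum (hasSum_div_add_one_pow_succ hc)

lemma tsum_div_add_one_pow_succ_mem_Icc (hc : 0 < c) (hg0 : ∀ r, 0 ≤ g r)
    (hgc : ∀ r, g r ≤ c) (N : ℕ) :
    ∑' r : ℕ, g r / (c + 1) ^ (r + 1) ∈
      Icc (∑ r ∈ Finset.range N, g r / (c + 1) ^ (r + 1))
        (∑ r ∈ Finset.range N, g r / (c + 1) ^ (r + 1) + (c + 1)⁻¹ ^ N) := by
  have htail : ∑' r : ℕ, g (r + N) / (c + 1) ^ (r + N + 1) =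
      (c + 1)⁻¹ ^ N * ∑' r : ℕ, g (r + N) / (c + 1) ^ (r + 1) := by
    rw [← tsum_mul_left]
    congr 1 with r
    rw [add_right_comm, pow_add, inv_pow]
    field_simp
  have hshift0 : ∀ r, 0 ≤ g (r + N) := fun r => hg0 _
  have hshiftc : ∀ r, g (r + N) ≤ c := fun r => hgc _
  rw [← (summable_div_add_one_pow_succ hc hg0 hgc).sum_add_tsum_nat_add N, htail]
  have h0 : 0 ≤ ∑' r : ℕ, g (r + N) / (c + 1) ^ (r + 1) :=
    tsum_nonneg fun r => div_nonneg (hshift0 r) (by positivity)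
  have h1 := tsum_div_add_one_pow_succ_le_one hc hshift0 hshiftc
  have hpow : 0 ≤ (c + 1)⁻¹ ^ N := by positivity
  exact ⟨le_add_of_nonneg_right (mul_nonneg hpow h0),
    add_le_add_right (mul_le_of_le_one_right hpow h1) _⟩

end DigitSeries

lemma floor_mul_pow_eq_floor_div {b r N : ℕ} (hb : b ≠ 0) (hr : r ≤ N) (x : ℝ) :
    ⌊x * b ^ r⌋ = ⌊x * b ^ N⌋ / (b ^ (N - r) : ℕ) := by
  rw [← Int.floor_div_natCast, ← pow_mul_pow_sub (b : ℝ) hr]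
  push_cast
  field_simp

lemma digitD_eq_of_floor_eq {m N r : ℕ} {x y : ℝ}
    (h : ⌊x * ((m : ℝ) + 1) ^ N⌋ = ⌊y * ((m : ℝ) + 1) ^ N⌋) (hr : r ≤ N) :
    digitD m x r = digitD m y r := by
  have key := floor_mul_pow_eq_floor_div (b := m + 1) m.succ_ne_zero hr
  push_cast at key
  rw [digitD, digitD, key, key, h]

lemma eventually_floor_mul_eq_nhdsGE {c : ℝ} (hc : 0 ≤ c) (x : ℝ) :
    ∀ᶠ y in 𝓝[≥] x, ⌊y * c⌋ = ⌊x * c⌋ := by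
  have hlt : ∀ᶠ y in 𝓝 x, y * c < ⌊x * c⌋ + 1 :=
    ((continuous_mul_const c).tendsto x).eventually_lt_const (Int.lt_floor_add_one _)
  filter_upwards [self_mem_nhdsWithin, nhdsWithin_le_nhds hlt] with y hxy hy
  exact Int.floor_eq_iff.mpr ⟨(Int.floor_le _).trans (mul_le_mul_of_nonneg_right hxy hc), hy⟩

lemma eventually_floor_mul_eq_nhds {c x : ℝ} (hx : (⌊x * c⌋ : ℝ) ≠ x * c) :
    ∀ᶠ y in 𝓝 x, ⌊y * c⌋ = ⌊x * c⌋ := by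
  have hcont := (continuous_mul_const c).tendsto x
  filter_upwards [hcont.eventually_const_lt ((Int.floor_le _).lt_of_ne hx),
    hcont.eventually_lt_const (Int.lt_floor_add_one _)] with y hlow hup
  exact Int.floor_eq_iff.mpr ⟨hlow.le, hup⟩

lemma floor_mul_pow_ne_of_forall_ne_div {b x : ℝ} (hb : 0 < b) (hx : 0 ≤ x)
    (hirr : ∀ k n : ℕ, x ≠ k / b ^ n) (N : ℕ) : (⌊x * b ^ N⌋ : ℝ) ≠ x * b ^ N := by
  intro h
  have hfloor : 0 ≤ ⌊x * b ^ N⌋ := Int.floor_nonneg.mpr (by positivity)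
  apply hirr ⌊x * b ^ N⌋.toNat N
  refine (eq_div_iff (by positivity)).mpr (h.symm.trans ?_)
  exact_mod_cast (Int.toNat_of_nonneg hfloor).symm

section CantorD

variable {m : ℕ} {f : ℕ → ℕ}

lemma digitD_le (x : ℝ) (r : ℕ) : digitD m x r ≤ m :=
  Nat.lt_succ_iff.mp (Nat.mod_lt _ m.succ_pos)

lemma dist_cantorD_le_of_floor_eq (hf : ∀ i ≤ m, f i ≤ f m) (hfm : 0 < f m) {N : ℕ} {x y : ℝ}
    (hx : x ≠ 1) (hy : y ≠ 1) (h : ⌊y * ((m : ℝ) + 1) ^ N⌋ = ⌊x * ((m : ℝ) + 1) ^ N⌋) :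
    dist (cantorD m f y) (cantorD m f x) ≤ ((f m : ℝ) + 1)⁻¹ ^ N := by
  have hmem (z : ℝ) := tsum_div_add_one_pow_succ_mem_Icc (c := (f m : ℝ))
    (g := fun r => (f (digitD m z (r + 1)) : ℝ)) (by exact_mod_cast hfm)
    (fun r => Nat.cast_nonneg _) (fun r => by exact_mod_cast hf _ (digitD_le z (r + 1))) N
  have hpartial : ∑ r ∈ Finset.range N, (f (digitD m y (r + 1)) : ℝ) / ((f m : ℝ) + 1) ^ (r + 1)
      = ∑ r ∈ Finset.range N, (f (digitD m x (r + 1)) : ℝ) / ((f m : ℝ) + 1) ^ (r + 1) :=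
    Finset.sum_congr rfl fun r hr => by
      rw [digitD_eq_of_floor_eq h (Finset.mem_range.mp hr)]
  rw [cantorD, if_neg hy, cantorD, if_neg hx]
  have hy' := hmem y
  rw [hpartial] at hy'
  simpa using Real.dist_le_of_mem_Icc hy' (hmem x)

lemma tendsto_cantorD_of_eventually_floor_eq (hf : ∀ i ≤ m, f i ≤ f m) (hfm : 0 < f m)
    {l : Filter ℝ} {x : ℝ} (hx : x ≠ 1)
    (h : ∀ N : ℕ, ∀ᶠ y in l, y ≠ 1 ∧ ⌊y * ((m : ℝ) + 1) ^ N⌋ = ⌊x * ((m : ℝ) + 1) ^ N⌋) :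
    Tendsto (cantorD m f) l (𝓝 (cantorD m f x)) := by
  refine Metric.tendsto_nhds.mpr fun ε hε => ?_
  have hq : ((f m : ℝ) + 1)⁻¹ < 1 :=
    inv_lt_one_of_one_lt₀ (lt_add_of_pos_left 1 (by exact_mod_cast hfm))
  obtain ⟨N, hN⟩ := exists_pow_lt_of_lt_one hε hq
  filter_upwards [h N] with y ⟨hy, hfloor⟩
  exact (dist_cantorD_le_of_floor_eq hf hfm hx hy hfloor).trans_lt hN

end CantorD

theorem cantorD_continuity_general (m : ℕ) (f : ℕ → ℕ)
    (hf : ∀ i j, i < j → j ≤ m → f i < f j) (hfm : m < f m) :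
    (∀ x ∈ Set.Ico (0 : ℝ) 1, ContinuousWithinAt (cantorD m f) (Set.Icc x 1) x) ∧
      (∀ x ∈ Set.Icc (0 : ℝ) 1, (∀ k n : ℕ, x ≠ (k : ℝ) / (m + 1) ^ n) →
        ContinuousWithinAt (cantorD m f) (Set.Icc 0 1) x) := by
  have hf_le (i : ℕ) (hi : i ≤ m) : f i ≤ f m :=
    hi.lt_or_eq.elim (fun hlt => (hf i m hlt le_rfl).le) (fun heq => heq ▸ le_rfl)
  have hfm0 : 0 < f m := by omega
  refine ⟨fun x hx => ?_, fun x hx hirr => ?_⟩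
  · have hle : 𝓝[Icc x 1] x ≤ 𝓝[≥] x := nhdsWithin_mono _ Icc_subset_Ici_self
    refine tendsto_cantorD_of_eventually_floor_eq hf_le hfm0 hx.2.ne fun N => ?_
    exact ((eventually_ne_nhds hx.2.ne).filter_mono nhdsWithin_le_nhds).and
      (hle (eventually_floor_mul_eq_nhdsGE (by positivity) x))
  · have hfrac := floor_mul_pow_ne_of_forall_ne_div (by positivity) hx.1 hirr
    have hx1 : x ≠ 1 := fun h => hfrac 0 (by simp [h])
    refine (tendsto_cantorD_of_eventually_floor_eq hf_le hfm0 hx1 fun N => ?_).mono_left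
      nhdsWithin_le_nhds
    exact (eventually_ne_nhds hx1).and (eventually_floor_mul_eq_nhds (hfrac N))

theorem cantorD_continuity (m : ℕ) (hm : 1 ≤ m) (f : ℕ → ℕ)
    (hf : ∀ i j, i < j → j ≤ m → f i < f j) (hf0 : f 0 = 0) (hfm : m < f m) :
    (∀ x ∈ Set.Ico (0 : ℝ) 1, ContinuousWithinAt (cantorD m f) (Set.Icc x 1) x) ∧
      (∀ x ∈ Set.Icc (0 : ℝ) 1, (∀ k n : ℕ, x ≠ (k : ℝ) / (m + 1) ^ n) →
        ContinuousWithinAt (cantorD m f) (Set.Icc 0 1) x) :=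
  cantorD_continuity_general m f hf hfm
end

section
/- With λ defined as the limit λ(x) = lim_{k→∞} C(⌊(m+1)^k x⌋)/((m+1)^k x)^α for x > 0, we have λ((m+1)x) = λ(x) for every x > 0, and λ(n) = C(n)/n^α for every positive integer n. -/
/-- The limit function `λ(x) = lim_k C(⌊(m+1)^k x⌋)/((m+1)^k x)^α`, given by its explicit
formula `(C(⌊x⌋) + Σ_{r≥1} f(ε_r)(f(m)+1)^{-r})/x^α` where `ε_1ε_2…` are the fractional
base-`(m+1)` digits of `x`. -/
noncomputable def cantorLam (m : ℕ) (f : ℕ → ℕ) (α : ℝ) (x : ℝ) : ℝ :=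
  ((cantorC m f ⌊x⌋.toNat : ℝ) +
      ∑' r : ℕ, (f (digitD m (Int.fract x) (r + 1)) : ℝ) / ((f m : ℝ) + 1) ^ (r + 1)) /
    x ^ α

/-!
Write `b = m + 1` and `F = f m + 1`. Multiplying `x` by `b` shifts its base-`b` expansion one
place to the left: the first fractional digit `ε₁` becomes the last integer digit, so
`C(⌊b x⌋) = f ε₁ + F C(⌊x⌋)`, while the fractional series loses its first term and is scaled
by `F`. Hence the numerator of `λ` is multiplied by `F`, and so is the denominator, because
`b ^ α = F`. At an integer all fractional digits vanish and `f 0 = 0` kills the series.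
-/

open Real

section Digits

variable {m : ℕ}

lemma digitD_eq_floor_mod (m : ℕ) (y : ℝ) (r : ℕ) :
    digitD m y r = ⌊y * ((m : ℝ) + 1) ^ r⌋₊ % (m + 1) := by
  rw [digitD, Int.floor_toNat]

lemma digitD_lt (m : ℕ) (y : ℝ) (r : ℕ) : digitD m y r < m + 1 :=
  Nat.mod_lt _ m.succ_pos

lemma digitD_zero (m r : ℕ) : digitD m 0 r = 0 := by
  simp [digitD]

lemma digitD_base_mul (y : ℝ) (r : ℕ) :
    digitD m (((m : ℝ) + 1) * y) r = digitD m y (r + 1) := by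
  rw [digitD, digitD, pow_succ', mul_comm _ y, mul_assoc]

lemma digitD_fract {y : ℝ} (hy : 0 ≤ y) {r : ℕ} (hr : r ≠ 0) :
    digitD m (Int.fract y) r = digitD m y r := by
  obtain ⟨r, rfl⟩ := Nat.exists_eq_succ_of_ne_zero hr
  have hsplit : y * ((m : ℝ) + 1) ^ (r + 1)
      = Int.fract y * ((m : ℝ) + 1) ^ (r + 1) + ((⌊y⌋₊ * (m + 1) ^ r * (m + 1) : ℕ) : ℝ) := by
    rw [← Int.self_sub_floor, ← Int.natCast_floor_eq_floor hy]
    push_cast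
    ring
  rw [digitD_eq_floor_mod, digitD_eq_floor_mod, hsplit,
    Nat.floor_add_natCast (by positivity [Int.fract_nonneg y]), Nat.add_mul_mod_self_right]

lemma digitD_fract_base_mul {x : ℝ} (hx : 0 ≤ x) (r : ℕ) :
    digitD m (Int.fract (((m : ℝ) + 1) * x)) (r + 1) = digitD m (Int.fract x) (r + 2) := by
  rw [digitD_fract (by positivity) r.succ_ne_zero, digitD_base_mul,
    digitD_fract hx (by omega)]

lemma floor_base_mul {x : ℝ} (hx : 0 ≤ x) :
    ⌊((m : ℝ) + 1) * x⌋₊ = (m + 1) * ⌊x⌋₊ + digitD m (Int.fract x) 1 := by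
  have hdiv : ⌊((m : ℝ) + 1) * x⌋₊ / (m + 1) = ⌊x⌋₊ := by
    rw [← Nat.floor_div_natCast]
    push_cast
    rw [mul_div_cancel_left₀ _ (by positivity)]
  rw [digitD_fract hx one_ne_zero, digitD_eq_floor_mod, pow_one, mul_comm x, ← hdiv,
    Nat.div_add_mod]

end Digits

lemma cantorC_base_mul_add {m : ℕ} (hm : 1 ≤ m) {f : ℕ → ℕ} (hf0 : f 0 = 0) (n : ℕ) {d : ℕ}
    (hd : d < m + 1) : cantorC m f ((m + 1) * n + d) = f d + (f m + 1) * cantorC m f n := by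
  by_cases hdn : d = 0 ∧ n = 0
  · simp [hdn.1, hdn.2, cantorC, hf0]
  · rw [cantorC, add_comm _ d, Nat.digits_add _ (by omega) _ _ hd (by tauto), List.map_cons,
      Nat.ofDigits_cons, cantorC]

lemma summable_div_pow_of_norm_le {u : ℕ → ℝ} {B q : ℝ} (hu : ∀ r, ‖u r‖ ≤ B) (hq : 1 < q) :
    Summable fun r => u r / q ^ r := by
  have hq0 : 0 < q := by linarith
  refine Summable.of_norm_bounded
    ((summable_geometric_of_lt_one (by positivity) (inv_lt_one_of_one_lt₀ hq)).mul_left B)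
    fun r => ?_
  rw [norm_div, norm_pow, Real.norm_of_nonneg hq0.le, inv_pow, ← div_eq_mul_inv]
  gcongr
  exact hu r

lemma mul_tsum_div_pow_succ {u : ℕ → ℝ} {q : ℝ} (hq : q ≠ 0)
    (hs : Summable fun r => u (r + 1) / q ^ (r + 1)) :
    q * ∑' r, u (r + 1) / q ^ (r + 1) = u 1 + ∑' r, u (r + 2) / q ^ (r + 1) := by
  rw [hs.tsum_eq_zero_add, mul_add, ← tsum_mul_left]
  congr 1
  · rw [zero_add, pow_one, mul_div_cancel₀ _ hq]
  · congr 1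
    funext r
    rw [pow_succ q (r + 1)]
    field_simp

noncomputable def cantorFracSum (m : ℕ) (f : ℕ → ℕ) (y : ℝ) : ℝ :=
  ∑' r : ℕ, (f (digitD m y (r + 1)) : ℝ) / ((f m : ℝ) + 1) ^ (r + 1)

lemma cantorLam_eq (m : ℕ) (f : ℕ → ℕ) (α x : ℝ) :
    cantorLam m f α x = ((cantorC m f ⌊x⌋₊ : ℝ) + cantorFracSum m f (Int.fract x)) / x ^ α := by
  rw [cantorLam, Int.floor_toNat, cantorFracSum]

lemma cantorFracSum_zero {m : ℕ} {f : ℕ → ℕ} (hf0 : f 0 = 0) : cantorFracSum m f 0 = 0 := by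
  simp [cantorFracSum, digitD_zero, hf0]

lemma cantorFracSum_fract_base_mul {m : ℕ} {f : ℕ → ℕ} (hfm : 0 < f m) {x : ℝ} (hx : 0 ≤ x) :
    cantorFracSum m f (Int.fract (((m : ℝ) + 1) * x))
      = ((f m : ℝ) + 1) * cantorFracSum m f (Int.fract x) - f (digitD m (Int.fract x) 1) := by
  set u : ℕ → ℝ := fun r => f (digitD m (Int.fract x) r)
  have hu : ∀ r, ‖u r‖ ≤ (Finset.range (m + 1)).sup f := fun r => by
    rw [Real.norm_natCast, Nat.cast_le]
    exact Finset.le_sup (Finset.mem_range.2 (digitD_lt m _ r))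
  have hs : Summable fun r => u (r + 1) / ((f m : ℝ) + 1) ^ (r + 1) :=
    (summable_nat_add_iff 1).2 (summable_div_pow_of_norm_le hu (by norm_cast; omega))
  have hshift := mul_tsum_div_pow_succ (by positivity) hs
  simp only [u, cantorFracSum, digitD_fract_base_mul hx] at hshift ⊢
  linarith

theorem cantorLam_periodic_and_values_general (m : ℕ) (hm : 1 ≤ m) (f : ℕ → ℕ)
    (hf0 : f 0 = 0) (hfm : m < f m)
    (α : ℝ) (hα : α = Real.log (f m + 1) / Real.log (m + 1)) :
    (∀ x : ℝ, 0 < x → cantorLam m f α (((m : ℝ) + 1) * x) = cantorLam m f α x) ∧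
      (∀ n : ℕ, 1 ≤ n → cantorLam m f α (n : ℝ) = (cantorC m f n : ℝ) / (n : ℝ) ^ α) := by
  refine ⟨fun x hx => ?_, fun n _ => ?_⟩
  · have hbase : ((m : ℝ) + 1) ≠ 1 := by norm_cast; omega
    have hden : (((m : ℝ) + 1) * x) ^ α = ((f m : ℝ) + 1) * x ^ α := by
      rw [mul_rpow (by positivity) hx.le, hα, log_div_log,
        rpow_logb (by positivity) hbase (by positivity)]
    rw [cantorLam_eq, cantorLam_eq, floor_base_mul hx.le,
      cantorC_base_mul_add hm hf0 _ (digitD_lt m _ 1), cantorFracSum_fract_base_mul (by omega) hx.le,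
      hden, ← mul_div_mul_left _ (x ^ α) (by positivity : ((f m : ℝ) + 1) ≠ 0)]
    push_cast
    ring
  · rw [cantorLam_eq, Int.fract_natCast, cantorFracSum_zero hf0, Nat.floor_natCast, add_zero]

theorem cantorLam_periodic_and_values (m : ℕ) (hm : 1 ≤ m) (f : ℕ → ℕ)
    (hf : ∀ i j, i < j → j ≤ m → f i < f j) (hf0 : f 0 = 0) (hfm : m < f m)
    (α : ℝ) (hα : α = Real.log (f m + 1) / Real.log (m + 1)) :
    (∀ x : ℝ, 0 < x → cantorLam m f α (((m : ℝ) + 1) * x) = cantorLam m f α x) ∧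
      (∀ n : ℕ, 1 ≤ n → cantorLam m f α (n : ℝ) = (cantorC m f n : ℝ) / (n : ℝ) ^ α) :=
  cantorLam_periodic_and_values_general m hm f hf0 hfm α hα
end
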